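/- arXiv:math/0608261 — 4 statements merged into one kernel-verified Lean document; each statement's English description precedes it below -/
import Mathlib

section
/- Let k be a field and R = k[x,y]. Fix integers 0 = a_0 < a_1 < ⋯ < a_r = d (r ≥ 1), set b_i = d − a_i, let I = ⟨x^{a_0}y^{b_0}, …, x^{a_r}y^{b_r}⟩ ⊆ R, and let S = ⟨a_0, …, a_r⟩ and T = ⟨b_0, …, b_r⟩ be the numerical semigroups generated by the exponents. Assume the nonzero a_i have gcd 1 and the nonzero b_i have gcd 1; let g(S) and g(T) be the Frobenius numbers of S and T (the integer such that every larger integer lies in the semigroup and which is not in the semigroup if nonnegative; equal to −1 when the semigroup is all of ℕ), and for a semigroup U ∈ {S, T} with largest generator c let Λ(U) = max{λ_U(u) : u ∈ U, u ≤ g(U) + c}, where λ_U(u) is the least total number of generators needed to represent u. Then for every integer l with l ≥ 2Λ(S) + 1 − (3 + 2g(S))/d and l ≥ 2Λ(T) + 1 − (3 + 2g(T))/d (inequalities of real numbers), I^l equals the ideal generated by all monomials x^s y^t with s ∈ S, t ∈ T, and s + t = d·l. -/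
/-!
A monomial `x^s y^t` with `s + t = d l` lies in `I^l` as soon as `s` is a sum of exactly `l`
generators `aᵢ` (the matching `bᵢ` then sum to `t`); since `a₀ = 0` and `b_r = 0` can pad a
representation, it suffices that `λ_S(s) ≤ l` or `λ_T(t) ≤ l`.

Removing the generator `d` repeatedly gives `d λ_S(s) ≤ d Λ(S) + s - g(S) - 1` for `s > g(S)`.
Taking `u ∈ (g(S), g(S) + d]` with `d ∣ u + g(T)`, the bound `λ_S(u) ≤ (u + g(T))/d` would put
`g(T)` into `T`; hence `d Λ(S) ≥ g(S) + g(T) + d + 1`, and symmetrically for `T`. With the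
hypothesis on `l` this forces `Λ(S), Λ(T) ≤ l`, which settles small `s` or `t`; if both `s` and
`t` are large and `λ_S(s), λ_T(t) > l`, adding the two estimates contradicts `s + t = d l`.
-/

open MvPolynomial

noncomputable def lam {r : ℕ} (a : Fin r → ℕ) (s : ℕ) : ℕ :=
  sInf {n | ∃ c : Fin r → ℕ, (∑ i, c i) = n ∧ (∑ i, c i * a i) = s}

section Lam

variable {n : ℕ} {a : Fin n → ℕ}

theorem mem_closure_range_iff_exists_sum {s : ℕ} :
    s ∈ AddSubmonoid.closure (Set.range a) ↔ ∃ c : Fin n → ℕ, ∑ i, c i * a i = s := by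
  simp [AddSubmonoid.mem_closure_range_iff_of_fintype, eq_comm]

theorem lam_le_of_sum_eq {s k : ℕ} (c : Fin n → ℕ) (hk : ∑ i, c i = k)
    (hs : ∑ i, c i * a i = s) : lam a s ≤ k :=
  Nat.sInf_le ⟨c, hk, hs⟩

theorem exists_sum_eq_lam {s : ℕ} (hs : s ∈ AddSubmonoid.closure (Set.range a)) :
    ∃ c : Fin n → ℕ, ∑ i, c i = lam a s ∧ ∑ i, c i * a i = s := by
  obtain ⟨c, hc⟩ := mem_closure_range_iff_exists_sum.1 hs
  have hne : {k | ∃ c : Fin n → ℕ, ∑ i, c i = k ∧ ∑ i, c i * a i = s}.Nonempty := ⟨_, c, rfl, hc⟩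
  exact Nat.sInf_mem hne

theorem lam_add_apply_le {u : ℕ} (hu : u ∈ AddSubmonoid.closure (Set.range a)) (i : Fin n) :
    lam a (u + a i) ≤ lam a u + 1 := by
  obtain ⟨c, hc, hcu⟩ := exists_sum_eq_lam hu
  refine lam_le_of_sum_eq (c + Pi.single i 1) ?_ ?_ <;>
    simp [add_mul, Finset.sum_add_distrib, Pi.single_apply, hc, hcu]

theorem lam_le_sSup {s : ℕ} (N : ℤ) (hs : s ∈ AddSubmonoid.closure (Set.range a))
    (hsN : (s : ℤ) ≤ N) :
    lam a s ≤ sSup {m | ∃ s : ℕ, s ∈ AddSubmonoid.closure (Set.range a) ∧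
      (s : ℤ) ≤ N ∧ lam a s = m} := by
  refine le_csSup (((Set.finite_Iic N.toNat).image (lam a)).bddAbove.mono ?_) ⟨s, hs, hsN, rfl⟩
  rintro _ ⟨u, -, hu, rfl⟩
  exact ⟨u, Set.mem_Iic.2 (by omega), rfl⟩

theorem sum_mul_add_sum_mul {d : ℕ} {b : Fin n → ℕ} (hab : ∀ i, a i + b i = d)
    (c : Fin n → ℕ) : ∑ i, c i * a i + ∑ i, c i * b i = d * ∑ i, c i := by
  simp only [← Finset.sum_add_distrib, ← mul_add, hab, Finset.sum_mul, mul_comm d]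

theorem exists_sum_eq_of_lam_le {d : ℕ} {b : Fin n → ℕ} (hab : ∀ i, a i + b i = d)
    (h0 : ∃ i, a i = 0) {s k : ℕ} (hs : s ∈ AddSubmonoid.closure (Set.range a))
    (hk : lam a s ≤ k) :
    ∃ c : Fin n → ℕ, ∑ i, c i = k ∧ ∑ i, c i * a i = s ∧ s + ∑ i, c i * b i = d * k := by
  obtain ⟨i₀, hi₀⟩ := h0
  obtain ⟨c, hc, hcs⟩ := exists_sum_eq_lam hs
  set c' : Fin n → ℕ := c + Pi.single i₀ (k - lam a s)
  have hsum : ∑ i, c' i = k := by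
    simp only [c', Pi.add_apply, Pi.single_apply, Finset.sum_add_distrib, hc, Finset.sum_ite_eq',
      Finset.mem_univ, ↓reduceIte]
    omega
  have hsuma : ∑ i, c' i * a i = s := by
    simp [c', add_mul, Finset.sum_add_distrib, Pi.single_apply, hcs, hi₀]
  refine ⟨_, hsum, hsuma, ?_⟩
  rw [← hsuma, sum_mul_add_sum_mul hab, hsum]

theorem exists_sum_eq_of_lam_le_or {d l s t : ℕ} {b : Fin n → ℕ} (hab : ∀ i, a i + b i = d)
    (h0a : ∃ i, a i = 0) (h0b : ∃ i, b i = 0) (hs : s ∈ AddSubmonoid.closure (Set.range a))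
    (ht : t ∈ AddSubmonoid.closure (Set.range b)) (hst : s + t = d * l)
    (h : lam a s ≤ l ∨ lam b t ≤ l) :
    ∃ c : Fin n → ℕ, ∑ i, c i = l ∧ ∑ i, c i * a i = s ∧ ∑ i, c i * b i = t := by
  rcases h with h | h
  · obtain ⟨c, hc, hca, hcb⟩ := exists_sum_eq_of_lam_le hab h0a hs h
    exact ⟨c, hc, hca, by omega⟩
  · obtain ⟨c, hc, hcb, hca⟩ :=
      exists_sum_eq_of_lam_le (fun i => by rw [add_comm, hab]) h0b ht h
    exact ⟨c, hc, by omega, hcb⟩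

end Lam

theorem exists_mem_Ioc_add_eq_mul {d : ℤ} (hd : 0 < d) {g : ℤ} (hg : -1 ≤ g) (c : ℤ) :
    ∃ (u : ℕ) (k : ℤ), g < u ∧ (u : ℤ) ≤ g + d ∧ u + c = d * k := by
  set r := (-(g + 1 + c)) % d
  have hdiv := Int.emod_add_mul_ediv (-(g + 1 + c)) d
  have hr0 : 0 ≤ r := Int.emod_nonneg _ hd.ne'
  have hrd : r < d := Int.emod_lt_of_pos _ hd
  refine ⟨(g + 1 + r).toNat, -((-(g + 1 + c)) / d), ?_⟩
  rw [Int.toNat_of_nonneg (by omega)]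
  exact ⟨by omega, by omega, by linarith⟩

theorem two_mul_mul_add_le_of_sub_div_le {d l Λ : ℕ} {g : ℤ} (hd : 0 < d)
    (h : 2 * (Λ : ℝ) + 1 - (3 + 2 * (g : ℝ)) / d ≤ l) :
    2 * (d : ℤ) * Λ + d ≤ d * l + 3 + 2 * g := by
  have hd' : (0 : ℝ) < d := by exact_mod_cast hd
  rw [sub_le_comm, le_div_iff₀ hd'] at h
  have : 2 * (d : ℝ) * Λ + d ≤ d * l + 3 + 2 * g := by nlinarith
  exact_mod_cast this

section Frobenius

variable {n d : ℕ} {a b : Fin n → ℕ}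

theorem mul_lam_add_le {g : ℤ} {Λ : ℕ} (hd : 0 < d) (hda : ∃ i, a i = d) (hg : -1 ≤ g)
    (hmem : ∀ m : ℕ, g < m → m ∈ AddSubmonoid.closure (Set.range a))
    (hΛ : ∀ s ∈ AddSubmonoid.closure (Set.range a), (s : ℤ) ≤ g + d → lam a s ≤ Λ)
    (s : ℕ) (hs : g < s) : (d : ℤ) * lam a s + g + 1 ≤ d * Λ + s := by
  induction s using Nat.strong_induction_on with
  | _ s ih =>
    by_cases hsd : (s : ℤ) ≤ g + d
    · have hsΛ : (lam a s : ℤ) ≤ Λ := by exact_mod_cast hΛ s (hmem s hs) hsd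
      nlinarith
    · obtain ⟨i, hi⟩ := hda
      have hds : d ≤ s := by omega
      have hprev := ih (s - d) (by omega) (by push_cast [hds]; omega)
      have hstep : lam a s ≤ lam a (s - d) + 1 := by
        simpa [hi, Nat.sub_add_cancel hds] using
          lam_add_apply_le (hmem (s - d) (by push_cast [hds]; omega)) i
      have hstep' : (lam a s : ℤ) ≤ lam a (s - d) + 1 := by exact_mod_cast hstep
      push_cast [hds] at hprev
      nlinarith

theorem frobenius_add_frobenius_add_lt_mul {gS gT : ℤ} {Λ : ℕ} (hd : 0 < d)
    (hab : ∀ i, a i + b i = d) (h0 : ∃ i, a i = 0) (hgS : -1 ≤ gS)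
    (hmemS : ∀ m : ℕ, gS < m → m ∈ AddSubmonoid.closure (Set.range a))
    (hnotT : 0 ≤ gT → gT.toNat ∉ AddSubmonoid.closure (Set.range b))
    (hΛ : ∀ s ∈ AddSubmonoid.closure (Set.range a), (s : ℤ) ≤ gS + d → lam a s ≤ Λ) :
    gS + gT + d + 1 ≤ (d : ℤ) * Λ := by
  obtain ⟨u, k, hgu, hud, huk⟩ := exists_mem_Ioc_add_eq_mul (d := d) (by exact_mod_cast hd) hgS gT
  have hu := hmemS u hgu
  -- Otherwise padding a minimal representation of `u` by the generator `a i = 0` writes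
  -- `d * k - u = gT` as a sum of `b`'s.
  have hk : k < lam a u := by
    by_contra! hle
    lift k to ℕ using (by omega)
    obtain ⟨c, -, -, hcb⟩ := exists_sum_eq_of_lam_le hab h0 hu (by exact_mod_cast hle)
    have hgT : gT = (∑ i, c i * b i : ℕ) := by
      have : ((u + ∑ i, c i * b i : ℕ) : ℤ) = (d * k : ℕ) := congrArg _ hcb
      push_cast at this ⊢
      linarith
    refine hnotT (by omega) ?_
    rw [hgT, Int.toNat_natCast]
    exact mem_closure_range_iff_exists_sum.2 ⟨c, rfl⟩
  have hΛu : (lam a u : ℤ) ≤ Λ := by exact_mod_cast hΛ u hu hud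
  nlinarith

theorem lam_le_or_lam_le {gS gT : ℤ} {ΛS ΛT l s t : ℕ} (hd : 0 < d)
    (hab : ∀ i, a i + b i = d) (hda : ∃ i, a i = d) (hdb : ∃ i, b i = d)
    (hgS : -1 ≤ gS) (hgT : -1 ≤ gT)
    (hmemS : ∀ m : ℕ, gS < m → m ∈ AddSubmonoid.closure (Set.range a))
    (hnotS : 0 ≤ gS → gS.toNat ∉ AddSubmonoid.closure (Set.range a))
    (hmemT : ∀ m : ℕ, gT < m → m ∈ AddSubmonoid.closure (Set.range b))
    (hnotT : 0 ≤ gT → gT.toNat ∉ AddSubmonoid.closure (Set.range b))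
    (hΛS : ∀ s ∈ AddSubmonoid.closure (Set.range a), (s : ℤ) ≤ gS + d → lam a s ≤ ΛS)
    (hΛT : ∀ t ∈ AddSubmonoid.closure (Set.range b), (t : ℤ) ≤ gT + d → lam b t ≤ ΛT)
    (hlS : 2 * (d : ℤ) * ΛS + d ≤ d * l + 3 + 2 * gS)
    (hlT : 2 * (d : ℤ) * ΛT + d ≤ d * l + 3 + 2 * gT)
    (hs : s ∈ AddSubmonoid.closure (Set.range a)) (ht : t ∈ AddSubmonoid.closure (Set.range b))
    (hst : s + t = d * l) : lam a s ≤ l ∨ lam b t ≤ l := by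
  have hab' : ∀ i, b i + a i = d := fun i => by rw [add_comm, hab]
  have h0a : ∃ i, a i = 0 := hdb.imp fun i hi => by have := hab i; omega
  have h0b : ∃ i, b i = 0 := hda.imp fun i hi => by have := hab i; omega
  have hS_bound := frobenius_add_frobenius_add_lt_mul hd hab h0a hgS hmemS hnotT hΛS
  have hT_bound := frobenius_add_frobenius_add_lt_mul hd hab' h0b hgT hmemT hnotS hΛT
  have hΛSl : ΛS ≤ l := by
    have : (d : ℤ) * ΛS ≤ d * l := by linarith
    exact_mod_cast le_of_mul_le_mul_left this (by exact_mod_cast hd)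
  have hΛTl : ΛT ≤ l := by
    have : (d : ℤ) * ΛT ≤ d * l := by linarith
    exact_mod_cast le_of_mul_le_mul_left this (by exact_mod_cast hd)
  by_contra! hlt
  have hs_big : gS + d < s := by
    by_contra! hle
    have := hΛS s hs hle
    omega
  have ht_big : gT + d < t := by
    by_contra! hle
    have := hΛT t ht hle
    omega
  have hlam_s := mul_lam_add_le hd hda hgS hmemS hΛS s (by omega)
  have hlam_t := mul_lam_add_le hd hdb hgT hmemT hΛT t (by omega)
  have hms : (d : ℤ) * (l + 1) ≤ d * lam a s := by exact_mod_cast Nat.mul_le_mul_left d hlt.1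
  have hmt : (d : ℤ) * (l + 1) ≤ d * lam b t := by exact_mod_cast Nat.mul_le_mul_left d hlt.2
  have hstz : (s : ℤ) + t = d * l := by exact_mod_cast hst
  linarith

end Frobenius

section Monomials

variable {R : Type*} [CommSemiring R] {n d : ℕ} {a b : Fin n → ℕ}

theorem prod_pow_mem_pow_sum {ι : Type*} [Fintype ι] {I : Ideal R} {f : ι → R}
    (hf : ∀ i, f i ∈ I) (c : ι → ℕ) : ∏ i, f i ^ c i ∈ I ^ ∑ i, c i := by
  rw [← Finset.prod_pow_eq_pow_sum]
  exact Ideal.prod_mem_prod fun i _ => Ideal.pow_mem_pow (hf i) _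

theorem prod_pow_mul_pow_pow (x y : R) (c : Fin n → ℕ) :
    ∏ i, (x ^ a i * y ^ b i) ^ c i = x ^ (∑ i, c i * a i) * y ^ (∑ i, c i * b i) := by
  simp only [mul_pow, ← pow_mul, Finset.prod_mul_distrib, Finset.prod_pow_eq_pow_sum, mul_comm]

theorem span_pow_le_span (x y : R) (hab : ∀ i, a i + b i = d) (l : ℕ) :
    Ideal.span (Set.range fun i => x ^ a i * y ^ b i) ^ l
      ≤ Ideal.span {m | ∃ s t : ℕ, s ∈ AddSubmonoid.closure (Set.range a) ∧
          t ∈ AddSubmonoid.closure (Set.range b) ∧ s + t = d * l ∧ m = x ^ s * y ^ t} := by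
  induction l with
  | zero =>
    rw [pow_zero, Ideal.one_eq_top, top_le_iff, Ideal.eq_top_iff_one]
    exact Ideal.subset_span ⟨0, 0, zero_mem _, zero_mem _, by simp, by simp⟩
  | succ l ih =>
    rw [pow_succ]
    refine (Ideal.mul_mono_left ih).trans ?_
    rw [Ideal.span_mul_span', Ideal.span_le]
    rintro _ ⟨_, ⟨s, t, hs, ht, hst, rfl⟩, _, ⟨i, rfl⟩, rfl⟩
    refine Ideal.subset_span ⟨s + a i, t + b i,
      add_mem hs (AddSubmonoid.subset_closure (Set.mem_range_self i)),
      add_mem ht (AddSubmonoid.subset_closure (Set.mem_range_self i)), ?_, by ring⟩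
    rw [Nat.mul_succ, ← hst, ← hab i]
    ring

theorem span_pow_eq_span (x y : R) (hab : ∀ i, a i + b i = d) (l : ℕ)
    (hrep : ∀ s t : ℕ, s ∈ AddSubmonoid.closure (Set.range a) →
      t ∈ AddSubmonoid.closure (Set.range b) → s + t = d * l →
      ∃ c : Fin n → ℕ, ∑ i, c i = l ∧ ∑ i, c i * a i = s ∧ ∑ i, c i * b i = t) :
    Ideal.span (Set.range fun i => x ^ a i * y ^ b i) ^ l
      = Ideal.span {m | ∃ s t : ℕ, s ∈ AddSubmonoid.closure (Set.range a) ∧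
          t ∈ AddSubmonoid.closure (Set.range b) ∧ s + t = d * l ∧ m = x ^ s * y ^ t} := by
  refine (span_pow_le_span x y hab l).antisymm (Ideal.span_le.2 ?_)
  rintro _ ⟨s, t, hs, ht, hst, rfl⟩
  obtain ⟨c, hc, rfl, rfl⟩ := hrep s t hs ht hst
  rw [← prod_pow_mul_pow_pow, ← hc]
  exact prod_pow_mem_pow_sum (fun i => Ideal.subset_span (Set.mem_range_self i)) c

end Monomials

theorem stmt6_general {K : Type*} [Field K] {r : ℕ} (hr : 1 ≤ r) (d : ℕ)
    (a b : Fin (r + 1) → ℕ) (ha0 : a 0 = 0) (hmono : StrictMono a)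
    (har : a (Fin.last r) = d) (hb : ∀ i, b i = d - a i)
    (gS gT : ℤ) (hgS_ge : -1 ≤ gS) (hgT_ge : -1 ≤ gT)
    (hgS_mem : ∀ n : ℕ, gS < (n : ℤ) → n ∈ AddSubmonoid.closure (Set.range a))
    (hgS_not : 0 ≤ gS → gS.toNat ∉ AddSubmonoid.closure (Set.range a))
    (hgT_mem : ∀ n : ℕ, gT < (n : ℤ) → n ∈ AddSubmonoid.closure (Set.range b))
    (hgT_not : 0 ≤ gT → gT.toNat ∉ AddSubmonoid.closure (Set.range b))
    (ΛS ΛT : ℕ)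
    (hΛS : ΛS = sSup {m | ∃ s : ℕ, s ∈ AddSubmonoid.closure (Set.range a) ∧
            (s : ℤ) ≤ gS + (d : ℤ) ∧ lam a s = m})
    (hΛT : ΛT = sSup {m | ∃ t : ℕ, t ∈ AddSubmonoid.closure (Set.range b) ∧
            (t : ℤ) ≤ gT + (d : ℤ) ∧ lam b t = m}) :
    ∀ l : ℕ,
      2 * (ΛS : ℝ) + 1 - (3 + 2 * (gS : ℝ)) / (d : ℝ) ≤ (l : ℝ) →
      2 * (ΛT : ℝ) + 1 - (3 + 2 * (gT : ℝ)) / (d : ℝ) ≤ (l : ℝ) →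
      (Ideal.span (Set.range fun i => X 0 ^ a i * X 1 ^ b i) :
          Ideal (MvPolynomial (Fin 2) K)) ^ l
        = Ideal.span {m : MvPolynomial (Fin 2) K | ∃ s t : ℕ,
            s ∈ AddSubmonoid.closure (Set.range a) ∧
            t ∈ AddSubmonoid.closure (Set.range b) ∧
            s + t = d * l ∧ m = X 0 ^ s * X 1 ^ t} := by
  intro l hlS hlT
  have hd : 0 < d := by
    have : NeZero r := ⟨by omega⟩
    simpa [ha0, har] using hmono (Fin.last_pos' (n := r))
  have hab : ∀ i, a i + b i = d := fun i => by
    rw [hb i, Nat.add_sub_cancel' (har ▸ hmono.monotone (Fin.le_last i))]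
  have hbr : b (Fin.last r) = 0 := by rw [hb, har, Nat.sub_self]
  have hb0 : b 0 = d := by rw [hb, ha0, Nat.sub_zero]
  have hΛS' : ∀ s ∈ AddSubmonoid.closure (Set.range a), (s : ℤ) ≤ gS + d → lam a s ≤ ΛS :=
    fun s hs hle => hΛS ▸ lam_le_sSup _ hs hle
  have hΛT' : ∀ t ∈ AddSubmonoid.closure (Set.range b), (t : ℤ) ≤ gT + d → lam b t ≤ ΛT :=
    fun t ht hle => hΛT ▸ lam_le_sSup _ ht hle
  refine span_pow_eq_span (X 0) (X 1) hab l fun s t hs ht hst => ?_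
  refine exists_sum_eq_of_lam_le_or hab ⟨0, ha0⟩ ⟨_, hbr⟩ hs ht hst ?_
  exact lam_le_or_lam_le hd hab ⟨_, har⟩ ⟨0, hb0⟩ hgS_ge hgT_ge hgS_mem hgS_not hgT_mem hgT_not
    hΛS' hΛT' (two_mul_mul_add_le_of_sub_div_le hd hlS) (two_mul_mul_add_le_of_sub_div_le hd hlT)
    hs ht hst

/-- explicit bound for statement 4.  With Frobenius numbers
`gS, gT` and `ΛS = max{λ_S(s) : s ∈ S, s ≤ gS + d}`,
`ΛT = max{λ_T(t) : t ∈ T, t ≤ gT + d}`, for every `l` with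
`l ≥ 2ΛS + 1 − (3 + 2gS)/d` and `l ≥ 2ΛT + 1 − (3 + 2gT)/d` one has
`I^l = ⟨x^s y^t : s ∈ S, t ∈ T, s + t = d·l⟩`. -/
theorem stmt6 {K : Type*} [Field K] {r : ℕ} (hr : 1 ≤ r) (d : ℕ)
    (a b : Fin (r + 1) → ℕ) (ha0 : a 0 = 0) (hmono : StrictMono a)
    (har : a (Fin.last r) = d) (hb : ∀ i, b i = d - a i)
    (hgcda : Finset.univ.gcd a = 1) (hgcdb : Finset.univ.gcd b = 1)
    (gS gT : ℤ) (hgS_ge : -1 ≤ gS) (hgT_ge : -1 ≤ gT)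
    (hgS_mem : ∀ n : ℕ, gS < (n : ℤ) → n ∈ AddSubmonoid.closure (Set.range a))
    (hgS_not : 0 ≤ gS → gS.toNat ∉ AddSubmonoid.closure (Set.range a))
    (hgT_mem : ∀ n : ℕ, gT < (n : ℤ) → n ∈ AddSubmonoid.closure (Set.range b))
    (hgT_not : 0 ≤ gT → gT.toNat ∉ AddSubmonoid.closure (Set.range b))
    (ΛS ΛT : ℕ)
    (hΛS : ΛS = sSup {m | ∃ s : ℕ, s ∈ AddSubmonoid.closure (Set.range a) ∧
            (s : ℤ) ≤ gS + (d : ℤ) ∧ lam a s = m})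
    (hΛT : ΛT = sSup {m | ∃ t : ℕ, t ∈ AddSubmonoid.closure (Set.range b) ∧
            (t : ℤ) ≤ gT + (d : ℤ) ∧ lam b t = m}) :
    ∀ l : ℕ,
      2 * (ΛS : ℝ) + 1 - (3 + 2 * (gS : ℝ)) / (d : ℝ) ≤ (l : ℝ) →
      2 * (ΛT : ℝ) + 1 - (3 + 2 * (gT : ℝ)) / (d : ℝ) ≤ (l : ℝ) →
      (Ideal.span (Set.range fun i => X 0 ^ a i * X 1 ^ b i) :
          Ideal (MvPolynomial (Fin 2) K)) ^ l
        = Ideal.span {m : MvPolynomial (Fin 2) K | ∃ s t : ℕ,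
            s ∈ AddSubmonoid.closure (Set.range a) ∧
            t ∈ AddSubmonoid.closure (Set.range b) ∧
            s + t = d * l ∧ m = X 0 ^ s * X 1 ^ t} :=
  stmt6_general hr d a b ha0 hmono har hb gS gT hgS_ge hgT_ge hgS_mem hgS_not hgT_mem hgT_not ΛS ΛT
    hΛS hΛT
end

section
/- Let k be a field and R = k[x,y]. Fix integers 0 = a_0 < a_1 < ⋯ < a_r = d (r ≥ 1), set b_i = d − a_i, let I = ⟨x^{a_0}y^{b_0}, …, x^{a_r}y^{b_r}⟩ ⊆ R, let S = ⟨a_0, …, a_r⟩ and T = ⟨b_0, …, b_r⟩ be the numerical semigroups generated by the exponents, and define the ideals I_S = ⟨x^s y^{d−s} : s ∈ S, s ≤ d⟩ and I_T = ⟨x^{d−t} y^t : t ∈ T, t ≤ d⟩. Then there exists an integer L such that for every l ≥ L there exists an ideal J of R with I^l = (y^{d(l−1)})·I_S + (x^{d(l−1)})·I_T + (x^d y^d)·J, where (m)·I' denotes the product of the principal ideal generated by the monomial m with the ideal I'. -/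
/-! A product of `l` generators of `I` is a monomial `x^s y^t` with `s ∈ S`, `t ∈ T` and
`s + t = dl`. If `s ≤ d` it lies in `y^{d(l-1)} I_S`, if `t ≤ d` in `x^{d(l-1)} I_T`, and
otherwise it is divisible by `x^d y^d`, so `J = I^l : x^d y^d` takes care of it. Conversely,
for `l ≥ d` every `s ∈ S` with `s ≤ d` is a sum of exactly `l` of the `a_i` (pad with
`a_0 = 0`), and the matching product of generators is `x^s y^{dl-s}`; symmetrically for `T`,
using `b_r = 0`. -/

open MvPolynomial

-- Drop the zero generators, leaving at most `t` summands, then pad with copies of `g i₀ = 0`.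
theorem AddSubmonoid.exists_coeffs_sum_eq_of_mem_closure_range_of_le {ι : Type*} [Fintype ι]
    {g : ι → ℕ} {i₀ : ι} (hi₀ : g i₀ = 0) {t n : ℕ}
    (ht : t ∈ AddSubmonoid.closure (Set.range g)) (htn : t ≤ n) :
    ∃ c : ι → ℕ, ∑ i, c i = n ∧ ∑ i, c i * g i = t := by
  classical
  obtain ⟨c₀, rfl⟩ := AddSubmonoid.exists_of_mem_closure_range g _ ht
  set c : ι → ℕ := fun i => if g i = 0 then 0 else c₀ i
  have hc : ∑ i, c i * g i = ∑ i, c₀ i • g i :=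
    Finset.sum_congr rfl fun i _ => by by_cases h : g i = 0 <;> simp [c, h]
  have hc_le : ∑ i, c i ≤ ∑ i, c i * g i :=
    Finset.sum_le_sum fun i _ => by
      by_cases h : g i = 0
      · simp [c, h]
      · exact Nat.le_mul_of_pos_right _ (Nat.pos_of_ne_zero h)
  refine ⟨c + Pi.single i₀ (n - ∑ i, c i), ?_, ?_⟩
  · simp only [Pi.add_apply, Finset.sum_add_distrib, Finset.sum_pi_single', Finset.mem_univ,
      if_true]
    omega
  · simp [add_mul, Finset.sum_add_distrib, Pi.single_apply, hi₀, hc]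

section

variable {R : Type*} [CommSemiring R]

theorem Ideal.span_singleton_mul_colon_le (I : Ideal R) (z : R) :
    Ideal.span {z} * I.colon (Ideal.span {z}) ≤ I :=
  Ideal.span_singleton_mul_le_iff.mpr fun w hw => by
    rw [mul_comm]; exact Ideal.mem_colon_span_singleton.mp hw

theorem Ideal.prod_pow_mem_span_range_pow {ι : Type*} [Fintype ι] (g : ι → R)
    (c : ι → ℕ) :
    ∏ i, g i ^ c i ∈ Ideal.span (Set.range g) ^ ∑ i, c i := by
  rw [← Finset.prod_pow_eq_pow_sum]
  exact Ideal.prod_mem_prod fun i _ =>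
    Ideal.pow_mem_pow (Ideal.subset_span (Set.mem_range_self i)) _

theorem Ideal.prod_mem_span_range_pow {ι : Type*} (g : ι → R) {n : ℕ} (f : Fin n → ι) :
    ∏ j, g (f j) ∈ Ideal.span (Set.range g) ^ n := by
  simpa using Ideal.prod_mem_prod (s := Finset.univ)
    (I := fun _ : Fin n => Ideal.span (Set.range g)) fun j _ => Ideal.subset_span ⟨f j, rfl⟩

theorem Ideal.span_range_pow_le {ι : Type*} (g : ι → R) {n : ℕ} {J : Ideal R}
    (h : ∀ f : Fin n → ι, ∏ j, g (f j) ∈ J) : Ideal.span (Set.range g) ^ n ≤ J := by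
  rw [Ideal.span, Submodule.span_pow, Submodule.span_le]
  intro m hm
  obtain ⟨f, rfl⟩ := Set.mem_pow.mp hm
  choose i hi using fun j => (f j).2
  simpa [List.prod_ofFn, ← hi] using h i

theorem prod_pow_mul_pow {ι : Type*} (s : Finset ι) (x y : R) (a b : ι → ℕ) :
    ∏ i ∈ s, x ^ a i * y ^ b i = x ^ (∑ i ∈ s, a i) * y ^ (∑ i ∈ s, b i) := by
  rw [Finset.prod_mul_distrib, Finset.prod_pow_eq_pow_sum, Finset.prod_pow_eq_pow_sum]

variable {ι : Type*} [Fintype ι] (x y : R) {a b : ι → ℕ} {d : ℕ}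

theorem pow_mul_pow_mem_span_range_pow (hab : ∀ i, a i + b i = d) {i₀ : ι} (ha₀ : a i₀ = 0)
    {s n : ℕ} (hs : s ∈ AddSubmonoid.closure (Set.range a)) (hsn : s ≤ n) :
    x ^ s * y ^ (d * n - s) ∈ Ideal.span (Set.range fun i => x ^ a i * y ^ b i) ^ n := by
  obtain ⟨c, hc, rfl⟩ :=
    AddSubmonoid.exists_coeffs_sum_eq_of_mem_closure_range_of_le ha₀ hs hsn
  have hcb : ∑ i, c i * b i = d * n - ∑ i, c i * a i := by
    have : ∑ i, c i * a i + ∑ i, c i * b i = d * n := by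
      simp_rw [← Finset.sum_add_distrib, ← mul_add, hab, ← Finset.sum_mul, hc, mul_comm]
    omega
  have := Ideal.prod_pow_mem_span_range_pow (fun i => x ^ a i * y ^ b i) c
  simp_rw [hc, mul_pow, ← pow_mul, prod_pow_mul_pow, mul_comm (a _), mul_comm (b _), hcb] at this
  exact this

theorem span_singleton_mul_span_le_span_range_pow (hab : ∀ i, a i + b i = d) {i₀ : ι}
    (ha₀ : a i₀ = 0) {n : ℕ} (hdn : d ≤ n) :
    Ideal.span {y ^ (d * (n - 1))} * Ideal.span {m : R | ∃ s : ℕ,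
        s ∈ AddSubmonoid.closure (Set.range a) ∧ s ≤ d ∧ m = x ^ s * y ^ (d - s)}
      ≤ Ideal.span (Set.range fun i => x ^ a i * y ^ b i) ^ n := by
  rw [Ideal.span_mul_span', Ideal.span_le]
  rintro _ ⟨_, rfl, _, ⟨s, hs, hsd, rfl⟩, rfl⟩
  have hexp : d * n - s = d * (n - 1) + (d - s) := by
    rcases n with _ | n
    · simp_all
    · rw [Nat.add_sub_cancel, Nat.mul_succ]; omega
  have h := pow_mul_pow_mem_span_range_pow x y hab ha₀ hs (hsd.trans hdn)
  rwa [hexp, pow_add, mul_left_comm] at h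

theorem pow_mul_pow_mem_sup_colon {x y : R} {P Q A : Ideal R} {s t e d : ℕ}
    (hst : s + t = e + d) (hP : s ≤ d → x ^ s * y ^ (d - s) ∈ P)
    (hQ : t ≤ d → x ^ (d - t) * y ^ t ∈ Q) (hA : x ^ s * y ^ t ∈ A) :
    x ^ s * y ^ t ∈ Ideal.span {y ^ e} * P + Ideal.span {x ^ e} * Q
      + Ideal.span {x ^ d * y ^ d} * A.colon (Ideal.span {x ^ d * y ^ d}) := by
  by_cases hs : s ≤ d
  · refine Ideal.mem_sup_left (Ideal.mem_sup_left ?_)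
    rw [show t = e + (d - s) by omega, pow_add, mul_left_comm]
    exact Ideal.mul_mem_mul (Ideal.mem_span_singleton_self _) (hP hs)
  by_cases ht : t ≤ d
  · refine Ideal.mem_sup_left (Ideal.mem_sup_right ?_)
    rw [show s = e + (d - t) by omega, pow_add, mul_assoc]
    exact Ideal.mul_mem_mul (Ideal.mem_span_singleton_self _) (hQ ht)
  obtain ⟨u, rfl⟩ := Nat.exists_eq_add_of_le (le_of_not_ge hs)
  obtain ⟨v, rfl⟩ := Nat.exists_eq_add_of_le (le_of_not_ge ht)
  refine Ideal.mem_sup_right ?_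
  have hsplit : x ^ (d + u) * y ^ (d + v) = x ^ d * y ^ d * (x ^ u * y ^ v) := by ring
  rw [hsplit] at hA ⊢
  refine Ideal.mul_mem_mul (Ideal.mem_span_singleton_self _) ?_
  rwa [Ideal.mem_colon_span_singleton, mul_comm]

end

theorem stmt7_general {K : Type*} [Field K] {r : ℕ} (d : ℕ)
    (a b : Fin (r + 1) → ℕ) (ha0 : a 0 = 0) (hmono : StrictMono a)
    (har : a (Fin.last r) = d) (hb : ∀ i, b i = d - a i)
    (I IS IT : Ideal (MvPolynomial (Fin 2) K))
    (hI : I = Ideal.span (Set.range fun i => X 0 ^ a i * X 1 ^ b i))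
    (hIS : IS = Ideal.span {m : MvPolynomial (Fin 2) K | ∃ s : ℕ,
        s ∈ AddSubmonoid.closure (Set.range a) ∧ s ≤ d ∧ m = X 0 ^ s * X 1 ^ (d - s)})
    (hIT : IT = Ideal.span {m : MvPolynomial (Fin 2) K | ∃ t : ℕ,
        t ∈ AddSubmonoid.closure (Set.range b) ∧ t ≤ d ∧ m = X 0 ^ (d - t) * X 1 ^ t}) :
    ∃ L : ℕ, ∀ l : ℕ, L ≤ l → ∃ J : Ideal (MvPolynomial (Fin 2) K),
      I ^ l = Ideal.span {X 1 ^ (d * (l - 1))} * IS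
            + Ideal.span {X 0 ^ (d * (l - 1))} * IT
            + Ideal.span {X 0 ^ d * X 1 ^ d} * J := by
  have hab : ∀ i, a i + b i = d := fun i => by
    have := har ▸ hmono.monotone (Fin.le_last i)
    rw [hb i]; omega
  have hb_last : b (Fin.last r) = 0 := by rw [hb, har, Nat.sub_self]
  refine ⟨d + 1, fun l hl =>
    ⟨(I ^ l).colon (Ideal.span {X 0 ^ d * X 1 ^ d} : Ideal (MvPolynomial (Fin 2) K)), ?_⟩⟩
  subst hI hIS hIT
  apply le_antisymm
  · refine Ideal.span_range_pow_le _ fun f => ?_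
    have hmem (g : Fin (r + 1) → ℕ) : ∑ j, g (f j) ∈ AddSubmonoid.closure (Set.range g) :=
      AddSubmonoid.sum_mem _ fun j _ => AddSubmonoid.subset_closure (Set.mem_range_self _)
    rw [prod_pow_mul_pow]
    refine pow_mul_pow_mem_sup_colon ?_ (fun hs => Ideal.subset_span ⟨_, hmem a, hs, rfl⟩)
      (fun ht => Ideal.subset_span ⟨_, hmem b, ht, rfl⟩) ?_
    · rw [← Finset.sum_add_distrib, ← Nat.mul_add_one, Nat.sub_add_cancel (by omega : 1 ≤ l)]
      simp [hab, mul_comm]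
    · rw [← prod_pow_mul_pow]
      exact Ideal.prod_mem_span_range_pow _ f
  · refine sup_le (sup_le ?_ ?_) (Ideal.span_singleton_mul_colon_le _ _)
    · exact span_singleton_mul_span_le_span_range_pow _ _ hab ha0 (by omega)
    · have := span_singleton_mul_span_le_span_range_pow (X 1 : MvPolynomial (Fin 2) K) (X 0)
        (fun i => (add_comm _ _).trans (hab i)) hb_last (n := l) (by omega)
      simpa only [mul_comm (X 1 ^ _ : MvPolynomial (Fin 2) K)] using this

/-- with `I = ⟨x^{a_i} y^{b_i}⟩`, `I_S = ⟨x^s y^{d−s} : s ∈ S, s ≤ d⟩`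
and `I_T = ⟨x^{d−t} y^t : t ∈ T, t ≤ d⟩`, there is `L` such that for every `l ≥ L`
there is an ideal `J` with
`I^l = (y^{d(l−1)})·I_S + (x^{d(l−1)})·I_T + (x^d y^d)·J`. -/
theorem stmt7 {K : Type*} [Field K] {r : ℕ} (hr : 1 ≤ r) (d : ℕ)
    (a b : Fin (r + 1) → ℕ) (ha0 : a 0 = 0) (hmono : StrictMono a)
    (har : a (Fin.last r) = d) (hb : ∀ i, b i = d - a i)
    (I IS IT : Ideal (MvPolynomial (Fin 2) K))
    (hI : I = Ideal.span (Set.range fun i => X 0 ^ a i * X 1 ^ b i))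
    (hIS : IS = Ideal.span {m : MvPolynomial (Fin 2) K | ∃ s : ℕ,
        s ∈ AddSubmonoid.closure (Set.range a) ∧ s ≤ d ∧ m = X 0 ^ s * X 1 ^ (d - s)})
    (hIT : IT = Ideal.span {m : MvPolynomial (Fin 2) K | ∃ t : ℕ,
        t ∈ AddSubmonoid.closure (Set.range b) ∧ t ≤ d ∧ m = X 0 ^ (d - t) * X 1 ^ t}) :
    ∃ L : ℕ, ∀ l : ℕ, L ≤ l → ∃ J : Ideal (MvPolynomial (Fin 2) K),
      I ^ l = Ideal.span {X 1 ^ (d * (l - 1))} * IS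
            + Ideal.span {X 0 ^ (d * (l - 1))} * IT
            + Ideal.span {X 0 ^ d * X 1 ^ d} * J :=
  stmt7_general d a b ha0 hmono har hb I IS IT hI hIS hIT
end

section
/- Let k be a field and R = k[x,y]. Fix integers 0 = a_0 < a_1 < ⋯ < a_r = d (r ≥ 1), set b_i = d − a_i, let I = ⟨x^{a_0}y^{b_0}, …, x^{a_r}y^{b_r}⟩ ⊆ R, and let S = ⟨a_0, …, a_r⟩ and T = ⟨b_0, …, b_r⟩ be the numerical semigroups generated by the exponents. Assume the nonzero a_i have gcd 1 and the nonzero b_i have gcd 1; let g(S), g(T) be the Frobenius numbers (the integer such that every larger integer lies in the semigroup and which is not in the semigroup if nonnegative; −1 when the semigroup is all of ℕ), and for U ∈ {S, T} with largest generator c let Λ(U) = max{λ_U(u) : u ∈ U, u ≤ g(U) + c}, where λ_U(u) is the least total number of generators needed to represent u. Then for every integer l with l ≥ ⌈max(2Λ(S) + 2 − (g(S)+1)/d, 2Λ(T) + 2 − (g(T)+1)/d)⌉ − 1, one has (I^{l+1} : I^l) = Ĩ = ⋃_{n ≥ 1} (I^{n+1} : I^n); in particular the Ratliff-Rush reduction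 number r(I) = min{l ≥ 0 : (I^{l+1} : I^l) = Ĩ} satisfies r(I) ≤ ⌈max(2Λ(S) + 2 − (g(S)+1)/d, 2Λ(T) + 2 − (g(T)+1)/d)⌉ − 1. -/
open MvPolynomial

/-- The Ratliff-Rush set associated to an ideal `I`: the union
`⋃_{l ≥ 1} (I^{l+1} : I^l)`. -/
def RRset {R : Type*} [CommRing R] (I : Ideal R) : Set R :=
  ⋃ l : ℕ, ⋃ (_ : 1 ≤ l), ((I ^ (l + 1)).colon ((I ^ l : Ideal R) : Set R) : Set R)


lemma memClosureIff {r : ℕ} (w : Fin r → ℕ) (n : ℕ) :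
    n ∈ AddSubmonoid.closure (Set.range w) ↔ ∃ c : Fin r → ℕ, (∑ i, c i * w i) = n := by
  constructor
  · intro h
    induction h using AddSubmonoid.closure_induction with
    | mem x hx =>
      obtain ⟨j, rfl⟩ := hx
      exact ⟨Pi.single j 1, by simp [Pi.single_apply, Finset.sum_ite_eq']⟩
    | zero => exact ⟨0, by simp⟩
    | add x y _ _ hx hy =>
      obtain ⟨c, rfl⟩ := hx; obtain ⟨c', rfl⟩ := hy
      exact ⟨c + c', by simp [add_mul, Finset.sum_add_distrib]⟩
  · rintro ⟨c, rfl⟩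
    refine AddSubmonoid.sum_mem _ (fun i _ => ?_)
    have : w i ∈ AddSubmonoid.closure (Set.range w) :=
      AddSubmonoid.subset_closure ⟨i, rfl⟩
    simpa using AddSubmonoid.nsmul_mem _ this (c i)

lemma lam_le {r : ℕ} (w : Fin r → ℕ) {s : ℕ} (c : Fin r → ℕ)
    (h : (∑ i, c i * w i) = s) : lam w s ≤ ∑ i, c i :=
  Nat.sInf_le ⟨c, rfl, h⟩

lemma lam_spec {r : ℕ} (w : Fin r → ℕ) {s : ℕ} (h : ∃ c : Fin r → ℕ, (∑ i, c i * w i) = s) :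
    ∃ c : Fin r → ℕ, (∑ i, c i) = lam w s ∧ (∑ i, c i * w i) = s := by
  obtain ⟨c, hc⟩ := h
  have : ({n | ∃ c : Fin r → ℕ, (∑ i, c i) = n ∧ (∑ i, c i * w i) = s}).Nonempty :=
    ⟨∑ i, c i, c, rfl, hc⟩
  obtain ⟨c', h1, h2⟩ := Nat.sInf_mem this
  exact ⟨c', h1, h2⟩

lemma le_lam_mul {r d : ℕ} {w : Fin r → ℕ} (hwle : ∀ i, w i ≤ d) {s : ℕ}
    (h : ∃ c : Fin r → ℕ, (∑ i, c i * w i) = s) : s ≤ lam w s * d := by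
  obtain ⟨c, h1, h2⟩ := lam_spec w h
  calc s = ∑ i, c i * w i := h2.symm
    _ ≤ ∑ i, c i * d := Finset.sum_le_sum (fun i _ => Nat.mul_le_mul_left _ (hwle i))
    _ = (∑ i, c i) * d := by rw [Finset.sum_mul]
    _ = lam w s * d := by rw [h1]

lemma lam_le_self {r : ℕ} (w : Fin r → ℕ) {s : ℕ}
    (h : ∃ c : Fin r → ℕ, (∑ i, c i * w i) = s) : lam w s ≤ s := by
  obtain ⟨c, hc⟩ := h
  set c' : Fin r → ℕ := fun i => if w i = 0 then 0 else c i with hc'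
  have hsum : (∑ i, c' i * w i) = s := by
    rw [← hc]; apply Finset.sum_congr rfl
    intro i _; by_cases h : w i = 0 <;> simp [c', h]
  calc lam w s ≤ ∑ i, c' i := lam_le w c' hsum
    _ ≤ ∑ i, c' i * w i := Finset.sum_le_sum (fun i _ => by
        by_cases h : w i = 0
        · simp [c', h]
        · exact Nat.le_mul_of_pos_right _ (Nat.pos_of_ne_zero h))
    _ = s := hsum

/-- Λ is an upper bound for `lam` on the closure up to `g + d`. -/
lemma lam_le_Lam {r d : ℕ} (w : Fin r → ℕ) (g : ℤ) (Λ : ℕ)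
    (hΛ : Λ = sSup {m | ∃ s : ℕ, s ∈ AddSubmonoid.closure (Set.range w) ∧
            (s : ℤ) ≤ g + (d : ℤ) ∧ lam w s = m}) :
    ∀ n : ℕ, n ∈ AddSubmonoid.closure (Set.range w) → (n : ℤ) ≤ g + d → lam w n ≤ Λ := by
  intro n hn hle
  have hbdd : BddAbove {m | ∃ s : ℕ, s ∈ AddSubmonoid.closure (Set.range w) ∧
      (s : ℤ) ≤ g + (d : ℤ) ∧ lam w s = m} := by
    refine ⟨(g + d).toNat, fun m hm => ?_⟩
    obtain ⟨s, hs, hsle, rfl⟩ := hm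
    have h1 : lam w s ≤ s := lam_le_self w ((memClosureIff w s).mp hs)
    have h2 : s ≤ (g + d).toNat := by omega
    omega
  rw [hΛ]
  exact le_csSup hbdd ⟨n, hn, hle, rfl⟩

/-- growth lemma: `lam w n ≤ Λ + k` when `n ≤ g + d + k d`. -/
lemma lam_growth {r d : ℕ} (hd : 0 < d) (w : Fin (r+1) → ℕ) (j : Fin (r+1)) (hj : w j = d)
    (g : ℤ) (hg : -1 ≤ g)
    (hmem : ∀ n : ℕ, g < (n : ℤ) → n ∈ AddSubmonoid.closure (Set.range w))
    (Λ : ℕ)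
    (hΛub : ∀ n : ℕ, n ∈ AddSubmonoid.closure (Set.range w) → (n : ℤ) ≤ g + d → lam w n ≤ Λ)
    (k : ℕ) :
    ∀ n : ℕ, n ∈ AddSubmonoid.closure (Set.range w) →
      (n : ℤ) ≤ g + d + k * d → lam w n ≤ Λ + k := by
  induction k with
  | zero => intro n hn hle; simpa using hΛub n hn (by push_cast at hle ⊢; linarith)
  | succ k ih =>
    intro n hn hle
    by_cases hcase : (n : ℤ) ≤ g + d + k * d
    · exact le_trans (ih n hn hcase) (by omega)
    · push_neg at hcase
      have hkd : (0:ℤ) ≤ (k:ℤ) * d := by positivity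
      have hnd : d ≤ n := by
        have : (d:ℤ) ≤ (n:ℤ) := by linarith
        exact_mod_cast this
      have hmem' : (n - d) ∈ AddSubmonoid.closure (Set.range w) := by
        apply hmem; push_cast [Nat.cast_sub hnd]; linarith
      have hrec : lam w (n - d) ≤ Λ + k := by
        apply ih _ hmem'
        push_cast [Nat.cast_sub hnd] at hle ⊢
        linarith
      obtain ⟨c, hc1, hc2⟩ := lam_spec w ((memClosureIff w (n - d)).mp hmem')
      set c' : Fin (r+1) → ℕ := fun i => c i + (if i = j then 1 else 0) with hc'
      have hrepn : (∑ i, c' i * w i) = n := by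
        simp only [hc', add_mul, ite_mul, one_mul, zero_mul, Finset.sum_add_distrib, hc2,
          Finset.sum_ite_eq', Finset.mem_univ, if_true, hj]
        omega
      have hsum : (∑ i, c' i) = lam w (n - d) + 1 := by
        simp only [hc', Finset.sum_add_distrib, hc1, Finset.sum_ite_eq', Finset.mem_univ, if_true]
      have := lam_le w c' hrepn
      rw [hsum] at this
      omega

/-- `g + 1 ≤ Λ * d`. -/
lemma frob_le_Lam_mul {r d : ℕ} (hd : 0 < d) (w : Fin (r+1) → ℕ) (hwle : ∀ i, w i ≤ d)
    (g : ℤ) (hg : -1 ≤ g)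
    (hmem : ∀ n : ℕ, g < (n : ℤ) → n ∈ AddSubmonoid.closure (Set.range w))
    (Λ : ℕ)
    (hΛub : ∀ n : ℕ, n ∈ AddSubmonoid.closure (Set.range w) → (n : ℤ) ≤ g + d → lam w n ≤ Λ) :
    g + 1 ≤ (Λ : ℤ) * d := by
  rcases lt_or_ge g 0 with h | h
  · have : g = -1 := by omega
    subst this; positivity
  · set n : ℕ := g.toNat + 1 with hn
    have hng : g < (n : ℤ) := by simp [hn]
    have hnmem := hmem n hng
    have hnle : (n : ℤ) ≤ g + d := by simp [hn]; omega
    have h1 : lam w n ≤ Λ := hΛub n hnmem hnle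
    have h2 : n ≤ lam w n * d := le_lam_mul hwle ((memClosureIff w n).mp hnmem)
    have : n ≤ Λ * d := le_trans h2 (Nat.mul_le_mul_right _ h1)
    have : (n : ℤ) ≤ (Λ : ℤ) * d := by exact_mod_cast this
    omega

/-- exponent pairs of the generators of `I^l`. -/
def Ee {r : ℕ} (a b : Fin (r+1) → ℕ) (l : ℕ) : Set (ℕ × ℕ) :=
  {p | ∃ c : Fin (r+1) → ℕ, (∑ i, c i) = l ∧ (∑ i, c i * a i) = p.1 ∧ (∑ i, c i * b i) = p.2}

lemma Ee_swap {r : ℕ} (a b : Fin (r+1) → ℕ) (l : ℕ) (p : ℕ × ℕ) :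
    p ∈ Ee a b l ↔ (p.2, p.1) ∈ Ee b a l := by
  constructor <;> rintro ⟨c, h1, h2, h3⟩ <;> exact ⟨c, h1, h3, h2⟩

lemma rep_sum_eq {r d : ℕ} {a b : Fin (r+1) → ℕ} (hab : ∀ i, a i + b i = d)
    (c : Fin (r+1) → ℕ) : (∑ i, c i * a i) + (∑ i, c i * b i) = (∑ i, c i) * d := by
  rw [← Finset.sum_add_distrib, Finset.sum_mul]
  exact Finset.sum_congr rfl (fun i _ => by rw [← Nat.mul_add, hab i])

lemma Ee_sum {r d : ℕ} {a b : Fin (r+1) → ℕ} (hab : ∀ i, a i + b i = d) {l : ℕ} {p : ℕ × ℕ}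
    (hp : p ∈ Ee a b l) : p.1 + p.2 = l * d := by
  obtain ⟨c, h1, h2, h3⟩ := hp
  rw [← h1, ← h2, ← h3]; exact rep_sum_eq hab c

/-- characterization of `Ee` via the `a`-side data. -/
lemma Ee_char {r d : ℕ} {a b : Fin (r+1) → ℕ} (hab : ∀ i, a i + b i = d)
    (i0 : Fin (r+1)) (ha0 : a i0 = 0) {l : ℕ} {p : ℕ × ℕ} :
    p ∈ Ee a b l ↔ p.1 + p.2 = l * d ∧
      p.1 ∈ AddSubmonoid.closure (Set.range a) ∧ lam a p.1 ≤ l := by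
  constructor
  · rintro hp
    refine ⟨Ee_sum hab hp, ?_, ?_⟩
    · obtain ⟨c, h1, h2, h3⟩ := hp
      exact (memClosureIff a p.1).mpr ⟨c, h2⟩
    · obtain ⟨c, h1, h2, h3⟩ := hp
      rw [← h1]; exact lam_le a c h2
  · rintro ⟨hsum, hmem, hlam⟩
    obtain ⟨c, hc1, hc2⟩ := lam_spec a ((memClosureIff a p.1).mp hmem)
    set c' : Fin (r+1) → ℕ := fun i => c i + (if i = i0 then l - lam a p.1 else 0) with hc'
    have hs1 : (∑ i, c' i) = l := by
      simp only [hc', Finset.sum_add_distrib, hc1, Finset.sum_ite_eq', Finset.mem_univ, if_true]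
      omega
    have hs2 : (∑ i, c' i * a i) = p.1 := by
      simp only [hc', add_mul, ite_mul, zero_mul, Finset.sum_add_distrib, hc2,
        Finset.sum_ite_eq', Finset.mem_univ, if_true, ha0, Nat.mul_zero, Nat.add_zero]
    have hs3 : (∑ i, c' i * b i) = p.2 := by
      have := rep_sum_eq hab c'
      rw [hs1, hs2] at this
      omega
    exact ⟨c', hs1, hs2, hs3⟩

/-- characterization of `Ee` via the `b`-side data. -/
lemma Ee_charT {r d : ℕ} {a b : Fin (r+1) → ℕ} (hab : ∀ i, a i + b i = d)
    (ir : Fin (r+1)) (hbr : b ir = 0) {l : ℕ} {p : ℕ × ℕ} :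
    p ∈ Ee a b l ↔ p.1 + p.2 = l * d ∧
      p.2 ∈ AddSubmonoid.closure (Set.range b) ∧ lam b p.2 ≤ l := by
  have hba : ∀ i, b i + a i = d := fun i => by have := hab i; omega
  rw [Ee_swap, Ee_char (d := d) hba ir hbr]
  constructor <;> rintro ⟨h1, h2, h3⟩ <;> exact ⟨by omega, h2, h3⟩

lemma Ee_add {r : ℕ} {a b : Fin (r+1) → ℕ} {l l' : ℕ} {p q : ℕ × ℕ}
    (hp : p ∈ Ee a b l) (hq : q ∈ Ee a b l') : (p.1 + q.1, p.2 + q.2) ∈ Ee a b (l + l') := by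
  obtain ⟨c, h1, h2, h3⟩ := hp
  obtain ⟨c', h1', h2', h3'⟩ := hq
  exact ⟨c + c', by simp [Finset.sum_add_distrib, h1, h1'],
    by simp [add_mul, Finset.sum_add_distrib, h2, h2'],
    by simp [add_mul, Finset.sum_add_distrib, h3, h3']⟩

lemma Ee_single {r : ℕ} (a b : Fin (r+1) → ℕ) (j : Fin (r+1)) :
    (a j, b j) ∈ Ee a b 1 := by
  refine ⟨fun i => if i = j then 1 else 0, ?_, ?_, ?_⟩ <;>
    simp [ite_mul, Finset.sum_ite_eq']

lemma Ee_zero {r : ℕ} (a b : Fin (r+1) → ℕ) (p : ℕ × ℕ) :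
    p ∈ Ee a b 0 ↔ p = (0, 0) := by
  constructor
  · rintro ⟨c, h1, h2, h3⟩
    have hc : ∀ i, c i = 0 := by
      intro i
      have := Finset.sum_eq_zero_iff.mp h1
      exact this i (Finset.mem_univ i)
    have : ∀ i, c i * a i = 0 := fun i => by rw [hc i]; ring
    have h2' : p.1 = 0 := by rw [← h2]; exact Finset.sum_eq_zero (fun i _ => this i)
    have h3' : p.2 = 0 := by
      rw [← h3]; exact Finset.sum_eq_zero (fun i _ => by rw [hc i]; ring)
    cases p; simp_all
  · rintro rfl
    exact ⟨0, by simp, by simp, by simp⟩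

lemma Ee_split {r : ℕ} {a b : Fin (r+1) → ℕ} {l : ℕ} {p : ℕ × ℕ}
    (hp : p ∈ Ee a b (l + 1)) :
    ∃ q ∈ Ee a b l, ∃ j, p = (q.1 + a j, q.2 + b j) := by
  obtain ⟨c, h1, h2, h3⟩ := hp
  have hex : ∃ j, 0 < c j := by
    by_contra h
    push_neg at h
    have : (∑ i, c i) = 0 := Finset.sum_eq_zero (fun i _ => by have := h i; omega)
    omega
  obtain ⟨j, hj⟩ := hex
  set c' : Fin (r+1) → ℕ := fun i => if i = j then c i - 1 else c i with hc'
  have hcc : ∀ i, c i = c' i + (if i = j then 1 else 0) := by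
    intro i; by_cases h : i = j <;> simp [hc', h] <;> omega
  have e1 : (∑ i, c i) = (∑ i, c' i) + 1 := by
    simp only [hcc]
    simp [Finset.sum_add_distrib, Finset.sum_ite_eq']
  have e2 : (∑ i, c i * a i) = (∑ i, c' i * a i) + a j := by
    simp only [hcc]
    simp [add_mul, ite_mul, Finset.sum_add_distrib, Finset.sum_ite_eq']
  have e3 : (∑ i, c i * b i) = (∑ i, c' i * b i) + b j := by
    simp only [hcc]
    simp [add_mul, ite_mul, Finset.sum_add_distrib, Finset.sum_ite_eq']
  refine ⟨(∑ i, c' i * a i, ∑ i, c' i * b i), ⟨c', by omega, rfl, rfl⟩, j, ?_⟩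
  cases p
  simp only [Prod.mk.injEq] at h2 h3 ⊢
  omega

/-- The core combinatorial descent step. -/
lemma coreStep {r d : ℕ} (hd : 0 < d) {a b : Fin (r+1) → ℕ} (hab : ∀ i, a i + b i = d)
    (i0 ir : Fin (r+1)) (ha0 : a i0 = 0) (har : a ir = d)
    (gS gT : ℤ) (hgS : -1 ≤ gS) (hgT : -1 ≤ gT)
    (hmemS : ∀ n : ℕ, gS < (n : ℤ) → n ∈ AddSubmonoid.closure (Set.range a))
    (hmemT : ∀ n : ℕ, gT < (n : ℤ) → n ∈ AddSubmonoid.closure (Set.range b))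
    (ΛS ΛT : ℕ)
    (hΛSub : ∀ n : ℕ, n ∈ AddSubmonoid.closure (Set.range a) → (n : ℤ) ≤ gS + d → lam a n ≤ ΛS)
    (hΛTub : ∀ n : ℕ, n ∈ AddSubmonoid.closure (Set.range b) → (n : ℤ) ≤ gT + d → lam b n ≤ ΛT)
    (l : ℕ)
    (hE1 : ((2*ΛS+2) * d : ℤ) ≤ ((l:ℤ)+1) * d + gS + 1)
    (hE2 : ((2*ΛT+2) * d : ℤ) ≤ ((l:ℤ)+1) * d + gT + 1)
    (α β : ℕ)
    (H : ∀ p ∈ Ee a b (l+1), ∃ q ∈ Ee a b (l+2), q.1 ≤ α + p.1 ∧ q.2 ≤ β + p.2) :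
    ∀ p ∈ Ee a b l, ∃ q ∈ Ee a b (l+1), q.1 ≤ α + p.1 ∧ q.2 ≤ β + p.2 := by
  -- basic facts
  have hb0 : b i0 = d := by have := hab i0; omega
  have hbr : b ir = 0 := by have := hab ir; omega
  have hale : ∀ i, a i ≤ d := fun i => by have := hab i; omega
  have hble : ∀ i, b i ≤ d := fun i => by have := hab i; omega
  have hdZ : (1:ℤ) ≤ (d:ℤ) := by exact_mod_cast hd
  have F1 : gS + 1 ≤ (ΛS : ℤ) * d := frob_le_Lam_mul hd a hale gS hgS hmemS ΛS hΛSub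
  have F2 : gT + 1 ≤ (ΛT : ℤ) * d := frob_le_Lam_mul hd b hble gT hgT hmemT ΛT hΛTub
  have hΛSl : (ΛS : ℤ) + 2 ≤ (l:ℤ) + 1 := by
    have h : ((ΛS:ℤ) + 2) * d ≤ ((l:ℤ)+1) * d := by linarith
    exact le_of_mul_le_mul_right h (by linarith)
  have hΛTl : (ΛT : ℤ) + 2 ≤ (l:ℤ) + 1 := by
    have h : ((ΛT:ℤ) + 2) * d ≤ ((l:ℤ)+1) * d := by linarith
    exact le_of_mul_le_mul_right h (by linarith)
  have hΛSln : ΛS ≤ l + 1 := by exact_mod_cast (by linarith : (ΛS:ℤ) ≤ (l:ℤ) + 1)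
  have hΛTln : ΛT ≤ l + 1 := by exact_mod_cast (by linarith : (ΛT:ℤ) ≤ (l:ℤ) + 1)
  have hkS : ((l + 1 - ΛS : ℕ) : ℤ) = (l:ℤ) + 1 - ΛS := by
    push_cast [Nat.cast_sub hΛSln]; ring
  have hkT : ((l + 1 - ΛT : ℕ) : ℤ) = (l:ℤ) + 1 - ΛT := by
    push_cast [Nat.cast_sub hΛTln]; ring
  have hGrowA : ∀ n : ℕ, n ∈ AddSubmonoid.closure (Set.range a) →
      (n : ℤ) ≤ gS + d + ((l:ℤ) + 1 - ΛS) * d → lam a n ≤ l + 1 := by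
    intro n hn hle
    have := lam_growth hd a ir har gS hgS hmemS ΛS hΛSub (l + 1 - ΛS) n hn (by rw [hkS]; exact hle)
    omega
  have hGrowB : ∀ n : ℕ, n ∈ AddSubmonoid.closure (Set.range b) →
      (n : ℤ) ≤ gT + d + ((l:ℤ) + 1 - ΛT) * d → lam b n ≤ l + 1 := by
    intro n hn hle
    have := lam_growth hd b i0 hb0 gT hgT hmemT ΛT hΛTub (l + 1 - ΛT) n hn (by rw [hkT]; exact hle)
    omega
  have hprod_nonnegS : (0:ℤ) ≤ ((l:ℤ) + 1 - ΛS) * d := mul_nonneg (by linarith) (by linarith)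
  have hprod_nonnegT : (0:ℤ) ≤ ((l:ℤ) + 1 - ΛT) * d := mul_nonneg (by linarith) (by linarith)
  -- main argument
  rintro ⟨s, t⟩ hp
  have hsum : s + t = l * d := Ee_sum hab hp
  have hp1 : (s, t + d) ∈ Ee a b (l + 1) := by
    have := Ee_add hp (Ee_single a b i0)
    rwa [ha0, hb0, Nat.add_zero] at this
  have hp2 : (s + d, t) ∈ Ee a b (l + 1) := by
    have := Ee_add hp (Ee_single a b ir)
    rwa [har, hbr, Nat.add_zero] at this
  obtain ⟨⟨s', t'⟩, hq', hs'le, ht'le⟩ := H _ hp1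
  obtain ⟨⟨s'', t''⟩, hq'', hs''le, ht''le⟩ := H _ hp2
  simp only at hs'le ht'le hs''le ht''le
  obtain ⟨hsum', hs'S, hlams'⟩ := (Ee_char (d := d) hab i0 ha0).mp hq'
  obtain ⟨hsum'', ht''T, hlamt''⟩ := (Ee_charT (d := d) hab ir hbr).mp hq''
  simp only at hsum' hs'S hlams' hsum'' ht''T hlamt''
  by_cases hA : lam a s' ≤ l + 1 ∧ d ≤ t'
  · refine ⟨(s', t' - d), (Ee_char (d := d) hab i0 ha0).mpr ⟨?_, hs'S, hA.1⟩, ?_, ?_⟩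
    · simp only
      have h1 : (l + 2) * d = (l + 1) * d + d := by ring
      omega
    · simpa using hs'le
    · simp only; omega
  by_cases hB : lam b t'' ≤ l + 1 ∧ d ≤ s''
  · refine ⟨(s'' - d, t''), (Ee_charT (d := d) hab ir hbr).mpr ⟨?_, ht''T, hB.1⟩, ?_, ?_⟩
    · simp only
      have h1 : (l + 2) * d = (l + 1) * d + d := by ring
      omega
    · simp only; omega
    · simpa using ht''le
  -- bad case
  have hlams'2 : l + 2 ≤ lam a s' := by
    by_contra h
    push_neg at h
    have h1 : lam a s' ≤ l + 1 := by omega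
    have ht' : t' < d := by
      by_contra h2; push_neg at h2; exact hA ⟨h1, h2⟩
    have h3 : s' ≤ lam a s' * d := le_lam_mul hale ((memClosureIff a s').mp hs'S)
    have h4 : lam a s' * d ≤ (l + 1) * d := Nat.mul_le_mul_right _ h1
    have h5 : (l + 2) * d = (l + 1) * d + d := by ring
    omega
  have hlamt''2 : l + 2 ≤ lam b t'' := by
    by_contra h
    push_neg at h
    have h1 : lam b t'' ≤ l + 1 := by omega
    have hs'' : s'' < d := by
      by_contra h2; push_neg at h2; exact hB ⟨h1, h2⟩
    have h3 : t'' ≤ lam b t'' * d := le_lam_mul hble ((memClosureIff b t'').mp ht''T)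
    have h4 : lam b t'' * d ≤ (l + 1) * d := Nat.mul_le_mul_right _ h1
    have h5 : (l + 2) * d = (l + 1) * d + d := by ring
    omega
  have hs'Z : gS + d + ((l:ℤ) + 1 - ΛS) * d < (s' : ℤ) := by
    by_contra h
    push_neg at h
    have := hGrowA s' hs'S h
    omega
  have ht''Z : gT + d + ((l:ℤ) + 1 - ΛT) * d < (t'' : ℤ) := by
    by_contra h
    push_neg at h
    have := hGrowB t'' ht''T h
    omega
  -- numeric setup over ℤ
  have hAZ : gS + d + ((l:ℤ) + 1 - ΛS) * d < (α : ℤ) + s := by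
    have : (s' : ℤ) ≤ (α : ℤ) + s := by exact_mod_cast hs'le
    linarith
  have hBZ : gT + d + ((l:ℤ) + 1 - ΛT) * d < (β : ℤ) + t := by
    have : (t'' : ℤ) ≤ (β : ℤ) + t := by exact_mod_cast ht''le
    linarith
  set u : ℤ := max (gS + 1) (((l:ℤ) + 1) * d - (β:ℤ) - (t:ℤ)) with hu
  have hringS : ((l:ℤ) + 1 - ΛS) * d = ((l:ℤ)+1) * d - (ΛS:ℤ) * d := by ring
  have hringT : ((l:ℤ) + 1 - ΛT) * d = ((l:ℤ)+1) * d - (ΛT:ℤ) * d := by ring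
  have c1 : gS < u := lt_of_lt_of_le (by omega) (le_max_left _ _)
  have c2 : u ≤ gS + d + ((l:ℤ) + 1 - ΛS) * d := by
    apply max_le
    · linarith
    · rw [hringS]; rw [hringS] at hAZ
      rw [hringT] at hBZ
      linarith
  have c3 : u ≤ (α : ℤ) + s := by
    apply max_le
    · linarith
    · rw [hringS] at hAZ; rw [hringT] at hBZ
      linarith
  have c4 : (0:ℤ) ≤ u := le_trans (by omega) (le_max_left _ _)
  have c5 : u ≤ ((l:ℤ) + 1) * d := by
    apply max_le
    · have : (ΛS:ℤ) * d ≤ ((l:ℤ)+1) * d := mul_le_mul_of_nonneg_right (by linarith) (by linarith)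
      linarith
    · have : (0:ℤ) ≤ (β:ℤ) + t := by positivity
      linarith
  set n : ℕ := u.toNat with hn
  have hnu : (n : ℤ) = u := Int.toNat_of_nonneg c4
  have hnS : n ∈ AddSubmonoid.closure (Set.range a) := hmemS n (by rw [hnu]; exact c1)
  have hlamn : lam a n ≤ l + 1 := hGrowA n hnS (by rw [hnu]; exact c2)
  have hnle : n ≤ (l + 1) * d := by
    have : (n:ℤ) ≤ ((l:ℤ)+1)*d := by rw [hnu]; exact c5
    have h2 : (((l+1) * d : ℕ) : ℤ) = ((l:ℤ)+1)*d := by push_cast; ring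
    omega
  have hq2 : (l+1) * d - n ≤ β + t := by
    have hmax := le_max_right (gS + 1) (((l:ℤ) + 1) * d - (β:ℤ) - (t:ℤ))
    rw [← hu, ← hnu] at hmax
    have h2 : (((l+1) * d : ℕ) : ℤ) = ((l:ℤ)+1)*d := by push_cast; ring
    omega
  refine ⟨(n, (l+1) * d - n), (Ee_char (d := d) hab i0 ha0).mpr ⟨?_, hnS, hlamn⟩, ?_, ?_⟩
  · simp only
    omega
  · simp only
    have : (n:ℤ) ≤ (α:ℤ) + s := by rw [hnu]; exact c3
    exact_mod_cast this
  · simpa using hq2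

/-- Membership in an ideal generated by monomials. -/
lemma mem_span_monomials {K : Type*} [Field K] {σ : Type*} [DecidableEq σ]
    (E : Set (σ →₀ ℕ)) (f : MvPolynomial σ K) :
    f ∈ Ideal.span ((fun u => monomial u (1:K)) '' E) ↔
      ∀ m ∈ f.support, ∃ u ∈ E, u ≤ m := by
  constructor
  · intro hf
    let J : Ideal (MvPolynomial σ K) :=
      { carrier := {f | ∀ m ∈ f.support, ∃ u ∈ E, u ≤ m}
        zero_mem' := by simp
        add_mem' := by
          intro x y hx hy m hm
          rcases Finset.mem_union.mp (MvPolynomial.support_add hm) with h | h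
          · exact hx m h
          · exact hy m h
        smul_mem' := by
          intro c x hx m hm
          rw [smul_eq_mul] at hm
          obtain ⟨m1, hm1, m2, hm2, rfl⟩ := Finset.mem_add.mp (MvPolynomial.support_mul c x hm)
          obtain ⟨u, hu, hle⟩ := hx m2 hm2
          exact ⟨u, hu, le_trans hle le_add_self⟩ }
    have hJ : Ideal.span ((fun u => monomial u (1:K)) '' E) ≤ J := by
      rw [Ideal.span_le]
      rintro g ⟨u, hu, rfl⟩
      intro m hm
      classical
      rw [MvPolynomial.support_monomial] at hm
      simp only [one_ne_zero, if_false, Finset.mem_singleton] at hm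
      exact ⟨u, hu, by simp [hm]⟩
    exact hJ hf
  · intro hf
    have hmem : (∑ m ∈ f.support, monomial m (coeff m f)) ∈
        Ideal.span ((fun u => monomial u (1:K)) '' E) := by
      apply Ideal.sum_mem
      intro m hm
      obtain ⟨u, hu, hle⟩ := hf m hm
      have heq : monomial m (coeff m f) = monomial (m - u) (coeff m f) * monomial u 1 := by
        rw [monomial_mul, mul_one, tsub_add_cancel_of_le hle]
      rw [heq]
      exact Ideal.mul_mem_left _ _ (Ideal.subset_span ⟨u, hu, rfl⟩)
    rwa [← f.as_sum] at hmem

/-- Colon of span: test on generators. -/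
lemma mem_colon_span {R : Type*} [CommRing R] (J : Ideal R) (G : Set R) (f : R) :
    f ∈ J.colon (Ideal.span G) ↔ ∀ g ∈ G, f * g ∈ J := by
  rw [Submodule.mem_colon]
  constructor
  · intro h g hg
    simpa [smul_eq_mul] using h g (Ideal.subset_span hg)
  · intro h p hp
    induction hp using Submodule.span_induction with
    | mem x hx => simpa [smul_eq_mul] using h x hx
    | zero => simp
    | add x y _ _ hx hy => rw [smul_add]; exact Ideal.add_mem _ hx hy
    | smul c x _ hx =>
      rw [smul_eq_mul, smul_eq_mul, ← mul_assoc, mul_comm f c, mul_assoc]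
      exact Ideal.mul_mem_left _ _ hx

noncomputable def fs (p : ℕ × ℕ) : Fin 2 →₀ ℕ := Finsupp.single 0 p.1 + Finsupp.single 1 p.2

lemma fs_apply0 (p : ℕ × ℕ) : fs p 0 = p.1 := by
  simp [fs, Finsupp.single_apply]
lemma fs_apply1 (p : ℕ × ℕ) : fs p 1 = p.2 := by
  simp [fs, Finsupp.single_apply]
lemma fs_add (p q : ℕ × ℕ) : fs p + fs q = fs (p.1 + q.1, p.2 + q.2) := by
  simp only [fs, Finsupp.single_add]
  abel
lemma fs_le_iff (q : ℕ × ℕ) (m : Fin 2 →₀ ℕ) (p : ℕ × ℕ) :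
    fs q ≤ m + fs p ↔ q.1 ≤ m 0 + p.1 ∧ q.2 ≤ m 1 + p.2 := by
  rw [Finsupp.le_def, Fin.forall_fin_two]
  simp [fs_apply0, fs_apply1, Finsupp.add_apply]

lemma Ee_one {r : ℕ} (a b : Fin (r+1) → ℕ) :
    Ee a b 1 = Set.range (fun i => (a i, b i)) := by
  ext p
  constructor
  · intro hp
    obtain ⟨q, hq, j, rfl⟩ := Ee_split (l := 0) hp
    rw [Ee_zero] at hq
    subst hq
    exact ⟨j, by simp⟩
  · rintro ⟨j, rfl⟩
    exact Ee_single a b j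

lemma pow_eq_span {K : Type*} [Field K] {r : ℕ} (a b : Fin (r+1) → ℕ)
    (I : Ideal (MvPolynomial (Fin 2) K))
    (hI : I = Ideal.span (Set.range fun i => X 0 ^ a i * X 1 ^ b i)) (l : ℕ) :
    I ^ l = Ideal.span ((fun u => monomial u (1:K)) '' (fs '' Ee a b l)) := by
  have hI1 : I = Ideal.span ((fun u => monomial u (1:K)) '' (fs '' Ee a b 1)) := by
    rw [hI]
    congr 1
    rw [Ee_one, Set.image_image, ← Set.range_comp]
    exact congrArg Set.range (funext fun i => by
      simp [Function.comp, X_pow_eq_monomial, monomial_mul, fs])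
  induction l with
  | zero =>
    have h0 : Ee a b 0 = {((0:ℕ), (0:ℕ))} := Set.ext (fun p => by rw [Ee_zero]; simp)
    rw [pow_zero, h0]
    have : fs (0, 0) = 0 := by simp [fs]
    simp only [Set.image_singleton, this]
    rw [show (monomial (0 : Fin 2 →₀ ℕ)) (1:K) = 1 by simp, Ideal.span_singleton_one,
      Ideal.one_eq_top]
  | succ l ih =>
    rw [pow_succ, ih, hI1, Ideal.span_mul_span']
    congr 1
    ext g
    rw [Set.mem_mul]
    constructor
    · rintro ⟨x, ⟨u, ⟨p, hp, rfl⟩, rfl⟩, y, ⟨v, ⟨q, hq, rfl⟩, rfl⟩, rfl⟩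
      refine ⟨fs (p.1 + q.1, p.2 + q.2), ⟨(p.1 + q.1, p.2 + q.2), Ee_add hp hq, rfl⟩, ?_⟩
      rw [monomial_mul, one_mul, fs_add]
    · rintro ⟨u, ⟨p, hp, rfl⟩, rfl⟩
      obtain ⟨q, hq, j, rfl⟩ := Ee_split hp
      refine ⟨monomial (fs q) 1, ⟨fs q, ⟨q, hq, rfl⟩, rfl⟩,
        monomial (fs (a j, b j)) 1, ⟨fs (a j, b j), ⟨(a j, b j), Ee_single a b j, rfl⟩, rfl⟩, ?_⟩
      rw [monomial_mul, one_mul, fs_add]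

lemma support_mul_monomial {K : Type*} [Field K] (f : MvPolynomial (Fin 2) K)
    (e m' : Fin 2 →₀ ℕ) :
    m' ∈ (f * monomial e (1:K)).support ↔ ∃ m ∈ f.support, m' = m + e := by
  rw [mem_support_iff, coeff_mul_monomial']
  constructor
  · intro h
    split_ifs at h with hle
    · rw [mul_one] at h
      exact ⟨m' - e, mem_support_iff.mpr h, (tsub_add_cancel_of_le hle).symm⟩
    · exact absurd rfl h
  · rintro ⟨m, hm, rfl⟩
    rw [if_pos (le_add_self : e ≤ m + e)]
    simpa [add_tsub_cancel_right] using mem_support_iff.mp hm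

/-- The key characterization of the colon ideal membership. -/
lemma colon_char {K : Type*} [Field K] {r : ℕ} (a b : Fin (r+1) → ℕ)
    (I : Ideal (MvPolynomial (Fin 2) K))
    (hI : I = Ideal.span (Set.range fun i => X 0 ^ a i * X 1 ^ b i)) (l : ℕ)
    (f : MvPolynomial (Fin 2) K) :
    f ∈ (I ^ (l+1)).colon ((I ^ l : Ideal (MvPolynomial (Fin 2) K)) : Set (MvPolynomial (Fin 2) K)) ↔
      ∀ m ∈ f.support, ∀ p ∈ Ee a b l, ∃ q ∈ Ee a b (l+1),
        q.1 ≤ m 0 + p.1 ∧ q.2 ≤ m 1 + p.2 := by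
  rw [pow_eq_span a b I hI l, pow_eq_span a b I hI (l+1), mem_colon_span]
  constructor
  · intro h m hm p hp
    have := h (monomial (fs p) 1) ⟨fs p, ⟨p, hp, rfl⟩, rfl⟩
    rw [mem_span_monomials] at this
    obtain ⟨u, ⟨q, hq, rfl⟩, hle⟩ := this (m + fs p)
      ((support_mul_monomial f (fs p) (m + fs p)).mpr ⟨m, hm, rfl⟩)
    exact ⟨q, hq, (fs_le_iff q m p).mp hle⟩
  · rintro h g ⟨u, ⟨p, hp, rfl⟩, rfl⟩
    rw [mem_span_monomials]
    intro m' hm'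
    obtain ⟨m, hm, rfl⟩ := (support_mul_monomial f (fs p) m').mp hm'
    obtain ⟨q, hq, h1, h2⟩ := h m hm p hp
    exact ⟨fs q, ⟨q, hq, rfl⟩, (fs_le_iff q m p).mpr ⟨h1, h2⟩⟩

/-- colon chain is increasing. -/
lemma colon_mono {R : Type*} [CommRing R] (I : Ideal R) (l : ℕ) :
    (I ^ (l+1)).colon ((I ^ l : Ideal R) : Set R) ≤ (I ^ (l+2)).colon ((I ^ (l+1) : Ideal R) : Set R) := by
  intro f hf
  rw [Submodule.mem_colon] at hf ⊢
  intro p hp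
  rw [pow_succ] at hp
  rw [smul_eq_mul]
  refine Submodule.mul_induction_on hp (fun m hm n hn => ?_) (fun x y hx hy => ?_)
  · rw [← mul_assoc, show (l+2) = (l+1) + 1 from rfl, pow_succ]
    exact Ideal.mul_mem_mul (by simpa [smul_eq_mul] using hf m hm) hn
  · rw [mul_add]; exact Ideal.add_mem _ hx hy

lemma ceil_branch (Λ : ℕ) (g : ℤ) (d : ℕ) (hd : 0 < d) (x : ℝ)
    (hx : 2*(Λ:ℝ) + 2 - ((g:ℝ)+1)/(d:ℝ) ≤ x) (l : ℕ) (hl : (⌈x⌉ - 1 : ℤ) ≤ (l:ℤ)) :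
    ((2*Λ+2) * d : ℤ) ≤ ((l:ℤ)+1) * d + g + 1 := by
  have hd' : (0:ℝ) < (d:ℝ) := by exact_mod_cast hd
  have h1 : (⌈x⌉ : ℝ) ≤ (l:ℝ) + 1 := by
    have : (⌈x⌉ : ℤ) ≤ (l:ℤ) + 1 := by omega
    exact_mod_cast this
  have h2 : 2*(Λ:ℝ) + 2 - ((g:ℝ)+1)/(d:ℝ) ≤ (l:ℝ) + 1 := le_trans hx (le_trans (Int.le_ceil x) h1)
  have h3 : (2*(Λ:ℝ) + 2 - ((l:ℝ)+1)) ≤ ((g:ℝ)+1)/(d:ℝ) := by linarith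
  have h4 : (2*(Λ:ℝ) + 2 - ((l:ℝ)+1)) * d ≤ (g:ℝ)+1 := (le_div_iff₀ hd').mp h3
  have h5 : (2*(Λ:ℝ)+2) * d ≤ ((l:ℝ)+1) * d + g + 1 := by nlinarith
  exact_mod_cast h5

/-- with the Frobenius numbers `gS, gT` and the constants `ΛS, ΛT`
as in the paper, every `l ≥ ⌈max(2ΛS + 2 − (gS+1)/d, 2ΛT + 2 − (gT+1)/d)⌉ − 1`
satisfies `(I^{l+1} : I^l) = Ĩ`; in particular the Ratliff-Rush reduction number
`r(I)` is bounded above by `⌈max(2ΛS + 2 − (gS+1)/d, 2ΛT + 2 − (gT+1)/d)⌉ − 1`. -/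
theorem stmt10 {K : Type*} [Field K] {r : ℕ} (hr : 1 ≤ r) (d : ℕ)
    (a b : Fin (r + 1) → ℕ) (ha0 : a 0 = 0) (hmono : StrictMono a)
    (har : a (Fin.last r) = d) (hb : ∀ i, b i = d - a i)
    (hgcda : Finset.univ.gcd a = 1) (hgcdb : Finset.univ.gcd b = 1)
    (gS gT : ℤ) (hgS_ge : -1 ≤ gS) (hgT_ge : -1 ≤ gT)
    (hgS_mem : ∀ n : ℕ, gS < (n : ℤ) → n ∈ AddSubmonoid.closure (Set.range a))
    (hgS_not : 0 ≤ gS → gS.toNat ∉ AddSubmonoid.closure (Set.range a))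
    (hgT_mem : ∀ n : ℕ, gT < (n : ℤ) → n ∈ AddSubmonoid.closure (Set.range b))
    (hgT_not : 0 ≤ gT → gT.toNat ∉ AddSubmonoid.closure (Set.range b))
    (ΛS ΛT : ℕ)
    (hΛS : ΛS = sSup {m | ∃ s : ℕ, s ∈ AddSubmonoid.closure (Set.range a) ∧
            (s : ℤ) ≤ gS + (d : ℤ) ∧ lam a s = m})
    (hΛT : ΛT = sSup {m | ∃ t : ℕ, t ∈ AddSubmonoid.closure (Set.range b) ∧
            (t : ℤ) ≤ gT + (d : ℤ) ∧ lam b t = m})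
    (I : Ideal (MvPolynomial (Fin 2) K))
    (hI : I = Ideal.span (Set.range fun i => X 0 ^ a i * X 1 ^ b i)) :
    (∀ l : ℕ,
        (⌈max (2 * (ΛS : ℝ) + 2 - ((gS : ℝ) + 1) / (d : ℝ))
              (2 * (ΛT : ℝ) + 2 - ((gT : ℝ) + 1) / (d : ℝ))⌉ - 1 : ℤ) ≤ (l : ℤ) →
        ((I ^ (l + 1)).colon ((I ^ l : Ideal (MvPolynomial (Fin 2) K)) : Set (MvPolynomial (Fin 2) K)) : Set (MvPolynomial (Fin 2) K)) = RRset I) ∧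
    (((sInf {l : ℕ |
        ((I ^ (l + 1)).colon ((I ^ l : Ideal (MvPolynomial (Fin 2) K)) : Set (MvPolynomial (Fin 2) K)) : Set (MvPolynomial (Fin 2) K)) = RRset I} : ℕ) : ℤ)
      ≤ ⌈max (2 * (ΛS : ℝ) + 2 - ((gS : ℝ) + 1) / (d : ℝ))
             (2 * (ΛT : ℝ) + 2 - ((gT : ℝ) + 1) / (d : ℝ))⌉ - 1) := by
  -- basic structural facts
  have h0last : (0 : Fin (r+1)) < Fin.last r := by
    rw [Fin.lt_iff_val_lt_val]
    simp only [Fin.val_last]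
    have : ((0 : Fin (r+1)) : ℕ) = 0 := rfl
    omega
  have hd : 0 < d := by
    have := hmono h0last
    omega
  have hale : ∀ i, a i ≤ d := fun i => by
    have := hmono.monotone (Fin.le_last i); omega
  have hab : ∀ i, a i + b i = d := fun i => by rw [hb i]; have := hale i; omega
  have hb0 : b 0 = d := by rw [hb 0, ha0]; omega
  have hbr : b (Fin.last r) = 0 := by rw [hb _, har]; omega
  set B : ℝ := max (2 * (ΛS : ℝ) + 2 - ((gS : ℝ) + 1) / (d : ℝ))
      (2 * (ΛT : ℝ) + 2 - ((gT : ℝ) + 1) / (d : ℝ)) with hB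
  set L0 : ℤ := ⌈B⌉ - 1 with hL0
  -- Λ upper bounds
  have hΛSub := lam_le_Lam (d := d) a gS ΛS hΛS
  have hΛTub := lam_le_Lam (d := d) b gT ΛT hΛT
  have hble : ∀ i, b i ≤ d := fun i => by have := hab i; omega
  have F1 : gS + 1 ≤ (ΛS : ℤ) * d := frob_le_Lam_mul hd a hale gS hgS_ge hgS_mem ΛS hΛSub
  -- `L0 ≥ 1`
  have hL0ge : 1 ≤ L0 := by
    have hd' : (0:ℝ) < (d:ℝ) := by exact_mod_cast hd
    have hF1R : (gS:ℝ) + 1 ≤ (ΛS:ℝ) * d := by exact_mod_cast F1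
    have hdiv : ((gS:ℝ)+1)/(d:ℝ) ≤ (ΛS:ℝ) := by
      rw [div_le_iff₀ hd']
      nlinarith
    have h2B : (2:ℝ) ≤ B := by
      have : (2:ℝ) ≤ 2 * (ΛS : ℝ) + 2 - ((gS : ℝ) + 1) / (d : ℝ) := by
        have : (0:ℝ) ≤ (ΛS:ℝ) := by positivity
        linarith
      exact le_trans this (le_max_left _ _)
    have : (2:ℤ) ≤ ⌈B⌉ := by
      have := le_trans h2B (Int.le_ceil B)
      exact_mod_cast this
    omega
  -- the descent step on colon ideals
  have descent : ∀ l : ℕ, L0 ≤ (l:ℤ) →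
      (I ^ (l+2)).colon ((I ^ (l+1) : Ideal (MvPolynomial (Fin 2) K)) : Set (MvPolynomial (Fin 2) K)) ≤ (I ^ (l+1)).colon ((I ^ l : Ideal (MvPolynomial (Fin 2) K)) : Set (MvPolynomial (Fin 2) K)) := by
    intro l hl
    have hE1 : ((2*ΛS+2) * d : ℤ) ≤ ((l:ℤ)+1) * d + gS + 1 :=
      ceil_branch ΛS gS d hd B (le_max_left _ _) l hl
    have hE2 : ((2*ΛT+2) * d : ℤ) ≤ ((l:ℤ)+1) * d + gT + 1 :=
      ceil_branch ΛT gT d hd B (le_max_right _ _) l hl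
    intro f hf
    rw [colon_char a b I hI (l+1)] at hf
    rw [colon_char a b I hI l]
    intro m hm
    exact coreStep hd hab 0 (Fin.last r) ha0 har gS gT hgS_ge hgT_ge hgS_mem hgT_mem
      ΛS ΛT hΛSub hΛTub l hE1 hE2 (m 0) (m 1) (hf m hm)
  -- increasing chain
  have up : ∀ l m : ℕ, l ≤ m →
      (I ^ (l+1)).colon ((I ^ l : Ideal (MvPolynomial (Fin 2) K)) : Set (MvPolynomial (Fin 2) K)) ≤ (I ^ (m+1)).colon ((I ^ m : Ideal (MvPolynomial (Fin 2) K)) : Set (MvPolynomial (Fin 2) K)) := by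
    intro l m hlm
    induction m, hlm using Nat.le_induction with
    | base => exact le_refl _
    | succ m hm ih => exact le_trans ih (colon_mono I m)
  -- decreasing chain beyond L0
  have down : ∀ l m : ℕ, L0 ≤ (l:ℤ) → l ≤ m →
      (I ^ (m+1)).colon ((I ^ m : Ideal (MvPolynomial (Fin 2) K)) : Set (MvPolynomial (Fin 2) K)) ≤ (I ^ (l+1)).colon ((I ^ l : Ideal (MvPolynomial (Fin 2) K)) : Set (MvPolynomial (Fin 2) K)) := by
    intro l m hLl hlm
    induction m, hlm using Nat.le_induction with
    | base => exact le_refl _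
    | succ m hm ih =>
      refine le_trans ?_ ih
      exact descent m (le_trans hLl (by exact_mod_cast hm))
  -- first conjunct
  have main : ∀ l : ℕ, L0 ≤ (l:ℤ) →
      ((I ^ (l + 1)).colon ((I ^ l : Ideal (MvPolynomial (Fin 2) K)) : Set (MvPolynomial (Fin 2) K)) : Set (MvPolynomial (Fin 2) K)) = RRset I := by
    intro l hl
    have hl1 : 1 ≤ l := by
      have : (1:ℤ) ≤ (l:ℤ) := le_trans hL0ge hl
      exact_mod_cast this
    ext x
    simp only [RRset, Set.mem_iUnion, SetLike.mem_coe]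
    constructor
    · intro hx
      exact ⟨l, hl1, hx⟩
    · rintro ⟨m, hm1, hx⟩
      rcases le_or_gt m l with h | h
      · exact up m l h hx
      · exact down l m hl (le_of_lt h) hx
  refine ⟨main, ?_⟩
  -- second conjunct
  set l1 : ℕ := L0.toNat with hl1
  have hcast : (l1 : ℤ) = L0 := Int.toNat_of_nonneg (by omega)
  have hmem : l1 ∈ {l : ℕ |
      ((I ^ (l + 1)).colon ((I ^ l : Ideal (MvPolynomial (Fin 2) K)) : Set (MvPolynomial (Fin 2) K)) : Set (MvPolynomial (Fin 2) K)) = RRset I} :=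
    main l1 (by omega)
  have := Nat.sInf_le hmem
  have h2 : ((sInf {l : ℕ |
      ((I ^ (l + 1)).colon ((I ^ l : Ideal (MvPolynomial (Fin 2) K)) : Set (MvPolynomial (Fin 2) K)) : Set (MvPolynomial (Fin 2) K)) = RRset I} : ℕ) : ℤ)
      ≤ (l1 : ℤ) := by exact_mod_cast this
  omega
end

section
/- Let 0 = a_0 < a_1 < ⋯ < a_r and b_0 > b_1 > ⋯ > b_r = 0 be integers satisfying b_0·a_i + a_r·b_i = a_r·b_0 for all i (i.e., a_i/a_r + b_i/b_0 = 1), and let S = ⟨a_0, …, a_r⟩ and T = ⟨b_0, …, b_r⟩ be the numerical semigroups they generate. Let α and β be nonnegative real numbers with α < 1. Then there exists L ∈ ℕ such that for every integer l ≥ L and every s ∈ S with s ≤ a_r·α·l + β and a_r·α·l + β ≤ a_r·l, there exist λ_0, …, λ_r ∈ ℕ with λ_0 + ⋯ + λ_r = l, s = λ_0 a_0 + ⋯ + λ_r a_r, and a_r·(λ_0 b_0 + ⋯ + λ_r b_r) = b_0·(a_r·l − s) (in particular λ_0 b_0 + ⋯ + λ_r b_r ∈ T). -/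
/-!
Since `b_0 a_i + a_r b_i = a_r b_0`, any `λ` with `∑ λ_i = l` and `∑ λ_i a_i = s` automatically
satisfies `a_r ∑ λ_i b_i = b_0 (a_r l - s)`, so the point is to write `s` as a sum of exactly `l`
generators. As `a_0 = 0`, at most `l` suffice. Starting from any representation of `s`, replace
`a_r` copies of `a_i` by `a_i` copies of `a_r` as long as possible: the result uses at most
`s / a_r + (r + 1) a_r ≤ α l + β / a_r + (r + 1) a_r` generators, which is `≤ l` for large `l`
because `α < 1`.
-/

open Finset

theorem exists_nat_forall_mul_add_le {α : ℝ} (hα : α < 1) (C : ℝ) :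
    ∃ L : ℕ, ∀ l : ℕ, L ≤ l → α * l + C ≤ l := by
  refine ⟨⌈C / (1 - α)⌉₊, fun l hl => ?_⟩
  have hC : C / (1 - α) ≤ l := (Nat.le_ceil _).trans (by exact_mod_cast hl)
  rw [div_le_iff₀ (by linarith)] at hC
  linarith

theorem exists_sum_mul_eq_and_mul_sum_le {ι : Type*} [Fintype ι] [DecidableEq ι]
    (a : ι → ℕ) {j : ι} (hj : 0 < a j) (μ : ι → ℕ) :
    ∃ ν : ι → ℕ, ∑ i, ν i * a i = ∑ i, μ i * a i ∧
      a j * ∑ i, ν i ≤ ∑ i, μ i * a i + a j * (Fintype.card ι * a j) := by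
  set A := a j
  set G := ∑ i, μ i / A * a i
  refine ⟨fun i => μ i % A + if i = j then G else 0, ?_, ?_⟩
  · simp only [add_mul, ite_mul, zero_mul, sum_add_distrib, sum_ite_eq', mem_univ, if_true]
    have hdivmod : ∀ i, μ i * a i = μ i % A * a i + A * (μ i / A * a i) := fun i => by
      rw [← mul_assoc, ← add_mul, Nat.mod_add_div]
    simp only [hdivmod, sum_add_distrib, ← mul_sum, G]
    ring
  · have hG : A * G ≤ ∑ i, μ i * a i := by
      rw [mul_sum]
      exact sum_le_sum fun i _ => by
        rw [← mul_assoc]; exact Nat.mul_le_mul_right _ (Nat.mul_div_le _ _)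
    have hR : ∑ i, μ i % A ≤ Fintype.card ι * A := by
      simpa using sum_le_sum fun i (_ : i ∈ univ) => (Nat.mod_lt (μ i) hj).le
    simp only [sum_add_distrib, sum_ite_eq', mem_univ, if_true, mul_add]
    nlinarith [Nat.mul_le_mul_left A hR]

theorem exists_sum_eq_and_sum_mul_eq {ι : Type*} [Fintype ι] [DecidableEq ι]
    {a : ι → ℕ} {i₀ : ι} (ha : a i₀ = 0) {ν : ι → ℕ} {l : ℕ} (hl : ∑ i, ν i ≤ l) :
    ∃ c : ι → ℕ, ∑ i, c i = l ∧ ∑ i, c i * a i = ∑ i, ν i * a i := by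
  refine ⟨ν + Pi.single i₀ (l - ∑ i, ν i), ?_, ?_⟩
  · simp [sum_add_distrib, hl]
  · simp [add_mul, sum_add_distrib, Pi.single_apply, ha]

theorem mul_sum_mul_add_mul_sum_mul {ι : Type*} [Fintype ι] {a b : ι → ℕ} {A B : ℕ}
    (h : ∀ i, B * a i + A * b i = A * B) (c : ι → ℕ) :
    A * ∑ i, c i * b i + B * ∑ i, c i * a i = A * B * ∑ i, c i := by
  simp only [mul_sum, ← sum_add_distrib]
  refine sum_congr rfl fun i _ => ?_
  linear_combination c i * h i

theorem stmt11_general {r : ℕ} (hr : 1 ≤ r) (a b : Fin (r + 1) → ℕ)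
    (ha0 : a 0 = 0) (hamono : StrictMono a)
    (hcond : ∀ i, b 0 * a i + a (Fin.last r) * b i = a (Fin.last r) * b 0)
    (α β : ℝ) (hα1 : α < 1) :
    ∃ L : ℕ, ∀ l : ℕ, L ≤ l → ∀ s : ℕ,
      s ∈ AddSubmonoid.closure (Set.range a) →
      (s : ℝ) ≤ (a (Fin.last r) : ℝ) * α * l + β →
      ((a (Fin.last r) : ℝ) * α * l + β) ≤ (a (Fin.last r) : ℝ) * l →
      ∃ c : Fin (r + 1) → ℕ,
        (∑ i, c i) = l ∧ (∑ i, c i * a i) = s ∧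
        a (Fin.last r) * (∑ i, c i * b i) = b 0 * (a (Fin.last r) * l - s) ∧
        (∑ i, c i * b i) ∈ AddSubmonoid.closure (Set.range b) := by
  set A := a (Fin.last r)
  have : NeZero r := ⟨by omega⟩
  have hA : 0 < A := ha0 ▸ hamono Fin.last_pos'
  obtain ⟨L, hL⟩ := exists_nat_forall_mul_add_le hα1 (β / A + (r + 1) * A)
  refine ⟨L, fun l hl s hs hsl _ => ?_⟩
  obtain ⟨μ, rfl⟩ := AddSubmonoid.mem_closure_range_iff_of_fintype.1 hs
  simp only [smul_eq_mul] at hsl ⊢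
  obtain ⟨ν, hνμ, hνlen⟩ := exists_sum_mul_eq_and_mul_sum_le a hA μ
  have hνl : ∑ i, ν i ≤ l := by
    rw [Fintype.card_fin] at hνlen
    have hνlenR : (A : ℝ) * ∑ i, ν i ≤ ∑ i, μ i * a i + A * ((r + 1) * A) := by
      exact_mod_cast hνlen
    have hA' : (0 : ℝ) < A := by exact_mod_cast hA
    have hAl : (A : ℝ) * ∑ i, ν i ≤ A * l := calc
      _ ≤ A * (α * l + (β / A + (r + 1) * A)) := by
        rw [mul_add, mul_add, mul_div_cancel₀ _ hA'.ne']; linarith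
      _ ≤ A * l := by gcongr; exact hL l hl
    exact_mod_cast le_of_mul_le_mul_left hAl hA'
  obtain ⟨c, hcl, hca⟩ := exists_sum_eq_and_sum_mul_eq ha0 hνl
  refine ⟨c, hcl, hca.trans hνμ, ?_, ?_⟩
  · have hb := mul_sum_mul_add_mul_sum_mul hcond c
    rw [hcl, hca, hνμ] at hb
    rw [Nat.mul_sub, show b 0 * (A * l) = A * b 0 * l by ring, ← hb, Nat.add_sub_cancel]
  · exact AddSubmonoid.mem_closure_range_iff_of_fintype.2 ⟨c, by simp⟩

/-- let `0 = a_0 < a_1 < ⋯ < a_r` and `b_0 > b_1 > ⋯ > b_r = 0`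
satisfy `b_0·a_i + a_r·b_i = a_r·b_0` for all `i` (i.e. `a_i/a_r + b_i/b_0 = 1`),
and let `S = ⟨a_i⟩`, `T = ⟨b_i⟩`.  For nonnegative reals `α < 1` and `β` there is
`L` such that for all `l ≥ L` and `s ∈ S` with `s ≤ a_r·α·l + β ≤ a_r·l`, there
are `λ_i` with `∑ λ_i = l`, `s = ∑ λ_i a_i` and
`a_r·(∑ λ_i b_i) = b_0·(a_r·l − s)`; in particular `∑ λ_i b_i ∈ T`. -/
theorem stmt11 {r : ℕ} (hr : 1 ≤ r) (a b : Fin (r + 1) → ℕ)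
    (ha0 : a 0 = 0) (hamono : StrictMono a)
    (hbr : b (Fin.last r) = 0) (hbanti : StrictAnti b)
    (hcond : ∀ i, b 0 * a i + a (Fin.last r) * b i = a (Fin.last r) * b 0)
    (α β : ℝ) (hα0 : 0 ≤ α) (hα1 : α < 1) (hβ : 0 ≤ β) :
    ∃ L : ℕ, ∀ l : ℕ, L ≤ l → ∀ s : ℕ,
      s ∈ AddSubmonoid.closure (Set.range a) →
      (s : ℝ) ≤ (a (Fin.last r) : ℝ) * α * l + β →
      ((a (Fin.last r) : ℝ) * α * l + β) ≤ (a (Fin.last r) : ℝ) * l →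
      ∃ c : Fin (r + 1) → ℕ,
        (∑ i, c i) = l ∧ (∑ i, c i * a i) = s ∧
        a (Fin.last r) * (∑ i, c i * b i) = b 0 * (a (Fin.last r) * l - s) ∧
        (∑ i, c i * b i) ∈ AddSubmonoid.closure (Set.range b) :=
  stmt11_general hr a b ha0 hamono hcond α β hα1
end
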